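/- arXiv:1203.2009 — 6 statements merged into one kernel-verified Lean document; each statement's English description precedes it below -/
import Mathlib

section
/- For all 0 ≤ m, n, m', n' ≤ L−1 and all 1 ≤ i, j ≤ N, the elements Â^{(i)}_{m,n} := q_m^{(i)} p_n^{(i)} of R satisfy the gl_L-type commutation relations: Â^{(i)}_{m,n} Â^{(j)}_{m',n'} − Â^{(j)}_{m',n'} Â^{(i)}_{m,n} = ℏ · δ_{i,j} · (δ_{n,m'} Â^{(i)}_{m,n'} − δ_{n',m} Â^{(i)}_{m',n}). -/
/-!
Statement 0: the elements `Â^{(i)}_{m,n} = q_m^{(i)} p_n^{(i)}` satisfy the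
`gl_L`-type commutation relations.
-/


lemma stmt0_inner {R : Type*} [Ring R] (m n m' n' : ℕ) (A B X Y : R)
    (hAB : m = m' → A = B)
    (hX0 : n = 0 → X = -1) (hY0 : n' = 0 → Y = -1) (hXY : X * Y = Y * X) :
    A * (if n = 0 then 0 else if m' = 0 then X else if n = m' then 1 else 0) * Y
      + (if m = 0 ∧ m' ≠ 0 then B else if m' = 0 ∧ m ≠ 0 then -A else 0) * (X * Y)
      - B * (if n' = 0 then 0 else if m = 0 then Y else if n' = m then 1 else 0) * X
    = (if n = m' then A * Y else 0) - (if n' = m then B * X else 0) := by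
  rcases eq_or_ne n 0 with hn0 | hn0 <;> rcases eq_or_ne n' 0 with hn'0 | hn'0 <;>
    rcases eq_or_ne m 0 with hm0 | hm0 <;> rcases eq_or_ne m' 0 with hm'0 | hm'0 <;>
    by_cases h1 : n = m' <;> by_cases h2 : n' = m <;>
    simp_all <;> (try rw [hAB (by omega)]) <;> (try simp only [mul_assoc, hXY]) <;> abel

/-- Master commutator expansion for products, given that `b` and `d` commute. -/
lemma stmt0_master {R : Type*} [Ring R] (a b c d : R) (hbd : b * d = d * b) :
    a*b*(c*d) - c*d*(a*b) =
      a*(b*c - c*b)*d + (a*c - c*a)*(b*d) + c*(a*d - d*a)*b := by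
  have key : a*b*(c*d) - c*d*(a*b)
      = a*(b*c - c*b)*d + (a*c - c*a)*(b*d) + c*(a*d - d*a)*b
        + (c*(a*(b*d)) - c*(a*(d*b))) := by noncomm_ring
  rw [key, hbd]
  noncomm_ring

/-- If `a, b` each commute with `c, d`, then `a*b` commutes with `c*d`. -/
lemma stmt0_comm4 {R : Type*} [Ring R] (a b c d : R)
    (hac : a*c = c*a) (hbc : b*c = c*b) (had : a*d = d*a) (hbd : b*d = d*b) :
    a*b*(c*d) = c*d*(a*b) := by
  calc a*b*(c*d) = a*(b*c)*d := by noncomm_ring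
    _ = a*(c*b)*d := by rw [hbc]
    _ = (a*c)*(b*d) := by noncomm_ring
    _ = (c*a)*(d*b) := by rw [hac, hbd]
    _ = c*(a*d)*b := by noncomm_ring
    _ = c*(d*a)*b := by rw [had]
    _ = c*d*(a*b) := by noncomm_ring

theorem stmt0 {R : Type*} [Ring R] [Algebra ℂ R]
    (L N : ℕ) (hL : 2 ≤ L) (hN : 1 ≤ N)
    (hbar : R) (e κ θ : ℕ → R) (q p : ℕ → ℕ → R)
    (hbar_central : ∀ r : R, hbar * r = r * hbar)
    (he_central : ∀ n, n ≤ L - 1 → ∀ r : R, e n * r = r * e n)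
    (hκ_central : ∀ n, n ≤ L - 1 → ∀ r : R, κ n * r = r * κ n)
    (hθ_central : ∀ j, j ≤ N → ∀ r : R, θ j * r = r * θ j)
    (he_sum : ∑ m ∈ Finset.range L, e m = algebraMap ℂ R (((L : ℂ) - 1) / 2))
    (hκ_sum : ∑ m ∈ Finset.range L, κ m = ∑ i ∈ Finset.range (N + 1), θ i)
    (hpq : ∀ m n i j, 1 ≤ m → m ≤ L - 1 → 1 ≤ n → n ≤ L - 1 →
      1 ≤ i → i ≤ N → 1 ≤ j → j ≤ N →
      p m j * q n i - q n i * p m j = if n = m ∧ i = j then hbar else 0)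
    (hqq : ∀ m n i j, 1 ≤ m → m ≤ L - 1 → 1 ≤ n → n ≤ L - 1 →
      1 ≤ i → i ≤ N → 1 ≤ j → j ≤ N → q m i * q n j = q n j * q m i)
    (hpp : ∀ m n i j, 1 ≤ m → m ≤ L - 1 → 1 ≤ n → n ≤ L - 1 →
      1 ≤ i → i ≤ N → 1 ≤ j → j ≤ N → p m i * p n j = p n j * p m i)
    (hq0 : ∀ i, 1 ≤ i → i ≤ N →
      q 0 i = θ i + ∑ m ∈ Finset.Icc 1 (L - 1), q m i * p m i)
    (hp0 : ∀ i, 1 ≤ i → i ≤ N → p 0 i = -1) :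
    ∀ m n m' n' i j, m ≤ L - 1 → n ≤ L - 1 → m' ≤ L - 1 → n' ≤ L - 1 →
      1 ≤ i → i ≤ N → 1 ≤ j → j ≤ N →
      q m i * p n i * (q m' j * p n' j) - q m' j * p n' j * (q m i * p n i) =
        hbar * ((if i = j then (1 : R) else 0) *
          ((if n = m' then q m i * p n' i else 0) -
            (if n' = m then q m' i * p n i else 0))) := by
  -- helper: a sum commutes with r if each term does
  have sum_comm : ∀ (f : ℕ → R) (r : R), (∀ k, 1 ≤ k → k ≤ L-1 → f k * r = r * f k) →
      (∑ k ∈ Finset.Icc 1 (L-1), f k) * r = r * ∑ k ∈ Finset.Icc 1 (L-1), f k := by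
    intro f r hf
    rw [Finset.sum_mul, Finset.mul_sum]
    refine Finset.sum_congr rfl ?_
    intro k hk
    rw [Finset.mem_Icc] at hk
    exact hf k hk.1 hk.2
  -- helper: q 0 i commutes with r if each q k i * p k i does
  have q0_comm : ∀ i r, 1 ≤ i → i ≤ N →
      (∀ k, 1 ≤ k → k ≤ L-1 → (q k i * p k i) * r = r * (q k i * p k i)) →
      q 0 i * r = r * q 0 i := by
    intro i r hi1 hiN hk
    rw [hq0 i hi1 hiN, add_mul, mul_add, hθ_central i hiN r, sum_comm _ r hk]
  -- cross commutation of p with q for distinct superscripts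
  have PQcross : ∀ n m i j, n ≤ L-1 → m ≤ L-1 → 1 ≤ i → i ≤ N → 1 ≤ j → j ≤ N → i ≠ j →
      p n j * q m i = q m i * p n j := by
    intro n m i j hn hm hi1 hiN hj1 hjN hij
    rcases Nat.eq_zero_or_pos n with rfl | hn1
    · rw [hp0 j hj1 hjN, neg_one_mul, mul_neg_one]
    rcases Nat.eq_zero_or_pos m with rfl | hm1
    · refine (q0_comm i (p n j) hi1 hiN ?_).symm
      intro k hk1 hkL
      have h1 : p n j * q k i = q k i * p n j := by
        have h := hpq n k i j hn1 hn hk1 hkL hi1 hiN hj1 hjN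
        rw [if_neg (by tauto)] at h
        exact sub_eq_zero.mp h
      have h2 : p k i * p n j = p n j * p k i := hpp k n i j hk1 hkL hn1 hn hi1 hiN hj1 hjN
      calc q k i * p k i * p n j = q k i * (p k i * p n j) := by rw [mul_assoc]
        _ = q k i * (p n j * p k i) := by rw [h2]
        _ = (q k i * p n j) * p k i := by rw [mul_assoc]
        _ = (p n j * q k i) * p k i := by rw [h1]
        _ = p n j * (q k i * p k i) := by rw [mul_assoc]
    · have h := hpq n m i j hn1 hn hm1 hm hi1 hiN hj1 hjN
      rw [if_neg (by tauto)] at h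
      exact sub_eq_zero.mp h
  -- cross commutation of q 0 with q m (m ≥ 1), distinct superscripts
  have QQcross0 : ∀ m i j, 1 ≤ m → m ≤ L-1 → 1 ≤ i → i ≤ N → 1 ≤ j → j ≤ N → i ≠ j →
      q 0 i * q m j = q m j * q 0 i := by
    intro m i j hm1 hm hi1 hiN hj1 hjN hij
    refine q0_comm i (q m j) hi1 hiN ?_
    intro k hk1 hkL
    have h1 : q k i * q m j = q m j * q k i := hqq k m i j hk1 hkL hm1 hm hi1 hiN hj1 hjN
    have h2 : p k i * q m j = q m j * p k i :=
      PQcross k m j i hkL hm hj1 hjN hi1 hiN (Ne.symm hij)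
    calc q k i * p k i * q m j = q k i * (p k i * q m j) := by rw [mul_assoc]
      _ = q k i * (q m j * p k i) := by rw [h2]
      _ = (q k i * q m j) * p k i := by rw [mul_assoc]
      _ = (q m j * q k i) * p k i := by rw [h1]
      _ = q m j * (q k i * p k i) := by rw [mul_assoc]
  -- cross commutation of q with q, all indices, distinct superscripts
  have QQcross : ∀ m m' i j, m ≤ L-1 → m' ≤ L-1 → 1 ≤ i → i ≤ N → 1 ≤ j → j ≤ N → i ≠ j →
      q m i * q m' j = q m' j * q m i := by
    intro m m' i j hm hm' hi1 hiN hj1 hjN hij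
    rcases Nat.eq_zero_or_pos m with rfl | hm1
    · rcases Nat.eq_zero_or_pos m' with rfl | hm'1
      · refine q0_comm i (q 0 j) hi1 hiN ?_
        intro k hk1 hkL
        have h1 : q 0 j * q k i = q k i * q 0 j :=
          QQcross0 k j i hk1 hkL hj1 hjN hi1 hiN (Ne.symm hij)
        have h2 : p k i * q 0 j = q 0 j * p k i :=
          PQcross k 0 j i hkL (by omega) hj1 hjN hi1 hiN (Ne.symm hij)
        calc q k i * p k i * q 0 j = q k i * (p k i * q 0 j) := by rw [mul_assoc]
          _ = q k i * (q 0 j * p k i) := by rw [h2]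
          _ = (q k i * q 0 j) * p k i := by rw [mul_assoc]
          _ = (q 0 j * q k i) * p k i := by rw [h1]
          _ = q 0 j * (q k i * p k i) := by rw [mul_assoc]
      · exact QQcross0 m' i j hm'1 hm' hi1 hiN hj1 hjN hij
    · rcases Nat.eq_zero_or_pos m' with rfl | hm'1
      · exact (QQcross0 m j i hm1 hm hj1 hjN hi1 hiN (Ne.symm hij)).symm
      · exact hqq m m' i j hm1 hm hm'1 hm' hi1 hiN hj1 hjN
  -- commutation of p with p, all indices, all superscripts
  have PPall : ∀ n n' i j, n ≤ L-1 → n' ≤ L-1 → 1 ≤ i → i ≤ N → 1 ≤ j → j ≤ N →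
      p n i * p n' j = p n' j * p n i := by
    intro n n' i j hn hn' hi1 hiN hj1 hjN
    rcases Nat.eq_zero_or_pos n with rfl | hn1
    · rw [hp0 i hi1 hiN, neg_one_mul, mul_neg_one]
    rcases Nat.eq_zero_or_pos n' with rfl | hn'1
    · rw [hp0 j hj1 hjN, neg_one_mul, mul_neg_one]
    exact hpp n n' i j hn1 hn hn'1 hn' hi1 hiN hj1 hjN
  intro m n m' n' i j hm hn hm' hn' hi1 hiN hj1 hjN
  rcases eq_or_ne i j with rfl | hij
  case inr =>
    -- distinct superscripts: everything commutes
    rw [if_neg hij, zero_mul, mul_zero, sub_eq_zero]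
    exact stmt0_comm4 (q m i) (p n i) (q m' j) (p n' j)
      (QQcross m m' i j hm hm' hi1 hiN hj1 hjN hij)
      ((PQcross n m' j i hn hm' hj1 hjN hi1 hiN (Ne.symm hij)).symm ▸
        (PQcross n m' j i hn hm' hj1 hjN hi1 hiN (Ne.symm hij)))
      ((PQcross n' m i j hn' hm hi1 hiN hj1 hjN hij).symm)
      (PPall n n' i j hn hn' hi1 hiN hj1 hjN)
  -- now i = j
  rw [if_pos rfl, one_mul]
  have hp0i : p 0 i = -1 := hp0 i hi1 hiN
  -- the [p, q] commutator, same superscript, all indices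
  have Cq : ∀ n m, n ≤ L-1 → m ≤ L-1 →
      p n i * q m i - q m i * p n i =
        hbar * (if n = 0 then 0 else if m = 0 then p n i else if n = m then 1 else 0) := by
    intro n m hn hm
    rcases Nat.eq_zero_or_pos n with rfl | hn1
    · rw [if_pos rfl, mul_zero, hp0i, neg_one_mul, mul_neg_one, sub_self]
    rcases Nat.eq_zero_or_pos m with rfl | hm1
    · rw [if_neg (by omega), if_pos rfl, hq0 i hi1 hiN, mul_add, add_mul,
        hθ_central i hiN (p n i), add_sub_add_left_eq_sub,
        Finset.mul_sum, Finset.sum_mul, ← Finset.sum_sub_distrib]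
      have hterm : ∀ k ∈ Finset.Icc 1 (L-1),
          p n i * (q k i * p k i) - q k i * p k i * p n i
            = if k = n then hbar * p n i else 0 := by
        intro k hk
        rw [Finset.mem_Icc] at hk
        have h1 := hpq n k i i hn1 hn hk.1 hk.2 hi1 hiN hi1 hiN
        simp only [and_true] at h1
        by_cases hkn : k = n
        · subst hkn
          rw [if_pos rfl] at h1 ⊢
          have h1' : p k i * q k i = q k i * p k i + hbar := by rw [← h1]; noncomm_ring
          have : p k i * (q k i * p k i) = q k i * p k i * p k i + hbar * p k i := by
            calc p k i * (q k i * p k i) = (p k i * q k i) * p k i := by rw [mul_assoc]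
              _ = (q k i * p k i + hbar) * p k i := by rw [h1']
              _ = q k i * p k i * p k i + hbar * p k i := by noncomm_ring
          rw [this]; abel
        · rw [if_neg hkn] at h1 ⊢
          have h1' : p n i * q k i = q k i * p n i := sub_eq_zero.mp h1
          have h2 := hpp k n i i hk.1 hk.2 hn1 hn hi1 hiN hi1 hiN
          have : p n i * (q k i * p k i) = q k i * p k i * p n i := by
            calc p n i * (q k i * p k i) = (p n i * q k i) * p k i := by rw [mul_assoc]
              _ = q k i * (p n i * p k i) := by rw [h1', mul_assoc]
              _ = q k i * (p k i * p n i) := by rw [← h2]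
              _ = q k i * p k i * p n i := by rw [mul_assoc]
          rw [this, sub_self]
      rw [Finset.sum_congr rfl hterm,
        Finset.sum_ite_eq' (Finset.Icc 1 (L-1)) n (fun _ => hbar * p n i),
        if_pos (Finset.mem_Icc.mpr ⟨hn1, hn⟩)]
    · rw [if_neg (by omega), if_neg (by omega)]
      have h1 := hpq n m i i hn1 hn hm1 hm hi1 hiN hi1 hiN
      simp only [and_true] at h1
      by_cases hnm : n = m
      · rw [if_pos hnm, mul_one, h1, if_pos hnm.symm]
      · rw [if_neg hnm, mul_zero, h1, if_neg (fun h => hnm h.symm)]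
  -- the [q, q] commutator, same superscript, all indices
  have Qq0 : ∀ m', 1 ≤ m' → m' ≤ L-1 →
      q 0 i * q m' i - q m' i * q 0 i = hbar * q m' i := by
    intro m' hm'1 hm'
    rw [hq0 i hi1 hiN, mul_add, add_mul, hθ_central i hiN (q m' i),
      add_sub_add_left_eq_sub, Finset.mul_sum, Finset.sum_mul,
      ← Finset.sum_sub_distrib]
    have hterm : ∀ k ∈ Finset.Icc 1 (L-1),
        q k i * p k i * q m' i - q m' i * (q k i * p k i)
          = if k = m' then hbar * q m' i else 0 := by
      intro k hk
      rw [Finset.mem_Icc] at hk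
      have h1 := hpq k m' i i hk.1 hk.2 hm'1 hm' hi1 hiN hi1 hiN
      simp only [and_true] at h1
      have h2 := hqq k m' i i hk.1 hk.2 hm'1 hm' hi1 hiN hi1 hiN
      by_cases hkm : k = m'
      · subst hkm
        rw [if_pos rfl] at h1 ⊢
        have h1' : p k i * q k i = q k i * p k i + hbar := by rw [← h1]; noncomm_ring
        have : q k i * p k i * q k i = q k i * (q k i * p k i) + hbar * q k i := by
          calc q k i * p k i * q k i = q k i * (p k i * q k i) := by rw [mul_assoc]
            _ = q k i * (q k i * p k i + hbar) := by rw [h1']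
            _ = q k i * (q k i * p k i) + q k i * hbar := by noncomm_ring
            _ = q k i * (q k i * p k i) + hbar * q k i := by rw [← hbar_central (q k i)]
        rw [this]; abel
      · rw [if_neg (fun h => hkm (by omega))] at h1
        rw [if_neg hkm]
        have h1' : p k i * q m' i = q m' i * p k i := sub_eq_zero.mp h1
        have : q k i * p k i * q m' i = q m' i * (q k i * p k i) := by
          calc q k i * p k i * q m' i = q k i * (p k i * q m' i) := by rw [mul_assoc]
            _ = q k i * (q m' i * p k i) := by rw [h1']
            _ = (q k i * q m' i) * p k i := by rw [mul_assoc]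
            _ = (q m' i * q k i) * p k i := by rw [h2]
            _ = q m' i * (q k i * p k i) := by rw [mul_assoc]
        rw [this, sub_self]
    rw [Finset.sum_congr rfl hterm,
      Finset.sum_ite_eq' (Finset.Icc 1 (L-1)) m' (fun _ => hbar * q m' i),
      if_pos (Finset.mem_Icc.mpr ⟨hm'1, hm'⟩)]
  have Qq : ∀ m m', m ≤ L-1 → m' ≤ L-1 →
      q m i * q m' i - q m' i * q m i =
        hbar * (if m = 0 ∧ m' ≠ 0 then q m' i
          else if m' = 0 ∧ m ≠ 0 then -(q m i) else 0) := by
    intro m m' hm hm'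
    rcases Nat.eq_zero_or_pos m with rfl | hm1
    · rcases Nat.eq_zero_or_pos m' with rfl | hm'1
      · simp
      · rw [if_pos ⟨rfl, by omega⟩]
        exact Qq0 m' hm'1 hm'
    · rcases Nat.eq_zero_or_pos m' with rfl | hm'1
      · rw [if_neg (by omega), if_pos ⟨rfl, by omega⟩]
        have h := Qq0 m hm1 hm
        have h' : q m i * q 0 i - q 0 i * q m i = -(hbar * q m i) := by rw [← h]; abel
        rw [h', mul_neg]
      · rw [if_neg (by omega), if_neg (by omega), mul_zero,
          hqq m m' i i hm1 hm hm'1 hm' hi1 hiN hi1 hiN, sub_self]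
  -- pull hbar through a product
  have pull : ∀ u x v : R, u * (hbar * x) * v = hbar * (u * x * v) := by
    intro u x v
    calc u * (hbar * x) * v = (u * hbar) * (x * v) := by noncomm_ring
      _ = (hbar * u) * (x * v) := by rw [← hbar_central u]
      _ = hbar * (u * x * v) := by noncomm_ring
  have hbd : p n i * p n' i = p n' i * p n i := PPall n n' i i hn hn' hi1 hiN hi1 hiN
  have hneg : q m i * p n' i - p n' i * q m i
      = -(hbar * (if n' = 0 then 0 else if m = 0 then p n' i
          else if n' = m then 1 else 0)) := by
    rw [← Cq n' m hn' hm]; abel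
  calc q m i * p n i * (q m' i * p n' i) - q m' i * p n' i * (q m i * p n i)
      = q m i * (p n i * q m' i - q m' i * p n i) * p n' i
        + (q m i * q m' i - q m' i * q m i) * (p n i * p n' i)
        + q m' i * (q m i * p n' i - p n' i * q m i) * p n i :=
      stmt0_master (q m i) (p n i) (q m' i) (p n' i) hbd
    _ = q m i * (hbar * (if n = 0 then 0 else if m' = 0 then p n i
            else if n = m' then 1 else 0)) * p n' i
        + (hbar * (if m = 0 ∧ m' ≠ 0 then q m' i
            else if m' = 0 ∧ m ≠ 0 then -(q m i) else 0)) * (p n i * p n' i)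
        + q m' i * (-(hbar * (if n' = 0 then 0 else if m = 0 then p n' i
            else if n' = m then 1 else 0))) * p n i := by
      rw [Cq n m' hn hm', Qq m m' hm hm', hneg]
    _ = hbar * (q m i * (if n = 0 then 0 else if m' = 0 then p n i
            else if n = m' then 1 else 0) * p n' i
        + (if m = 0 ∧ m' ≠ 0 then q m' i
            else if m' = 0 ∧ m ≠ 0 then -(q m i) else 0) * (p n i * p n' i)
        - q m' i * (if n' = 0 then 0 else if m = 0 then p n' i
            else if n' = m then 1 else 0) * p n i) := by
      rw [mul_neg, neg_mul, pull, pull]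
      noncomm_ring
    _ = hbar * ((if n = m' then q m i * p n' i else 0)
          - (if n' = m then q m' i * p n i else 0)) := by
      rw [stmt0_inner m n m' n' (q m i) (q m' i) (p n i) (p n' i)
        (fun h => by rw [h]) (fun h => by rw [h, hp0i]) (fun h => by rw [h, hp0i]) hbd]
end

section
/- For any three pairwise distinct indices i, j, k ∈ {1, …, N}, the elements Ω_{i,j} := (1/2) Σ_{m,n=0}^{L−1} q_m^{(i)} p_n^{(i)} q_n^{(j)} p_m^{(j)} of R satisfy the infinitesimal braid relation Ω_{i,j} (Ω_{i,k} + Ω_{k,j}) = (Ω_{i,k} + Ω_{k,j}) Ω_{i,j}. -/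
lemma cross_aux {R : Type*} [Ring R] (L : ℕ) (hL : 2 ≤ L) (θ1 θ2 : R)
    (hθ1 : ∀ r : R, θ1 * r = r * θ1) (hθ2 : ∀ r : R, θ2 * r = r * θ2)
    (Q1 P1 Q2 P2 : ℕ → R)
    (hcomm : ∀ m n, 1 ≤ m → m < L → 1 ≤ n → n < L →
      Commute (Q1 m) (Q2 n) ∧ Commute (Q1 m) (P2 n) ∧
      Commute (P1 m) (Q2 n) ∧ Commute (P1 m) (P2 n))
    (hQ10 : Q1 0 = θ1 + ∑ m ∈ Finset.Icc 1 (L - 1), Q1 m * P1 m)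
    (hP10 : P1 0 = -1)
    (hQ20 : Q2 0 = θ2 + ∑ m ∈ Finset.Icc 1 (L - 1), Q2 m * P2 m)
    (hP20 : P2 0 = -1) :
    ∀ a b c d, a < L → b < L → c < L → d < L →
      Commute (Q1 a * P1 b) (Q2 c * P2 d) := by
  have hmem : ∀ m, m ∈ Finset.Icc 1 (L - 1) → 1 ≤ m ∧ m < L := by
    intro m hm
    simp only [Finset.mem_Icc] at hm
    omega
  have hth1 : ∀ r : R, Commute θ1 r := fun r => hθ1 r
  have hth2 : ∀ r : R, Commute r θ2 := fun r => (hθ2 r).symm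
  have step1 : ∀ a n, a < L → 1 ≤ n → n < L →
      Commute (Q1 a) (Q2 n) ∧ Commute (Q1 a) (P2 n) ∧
      Commute (P1 a) (Q2 n) ∧ Commute (P1 a) (P2 n) := by
    intro a n ha hn1 hn2
    rcases Nat.eq_zero_or_pos a with rfl | ha1
    · rw [hQ10, hP10]
      refine ⟨?_, ?_, ?_, ?_⟩
      · refine Commute.add_left (hth1 _) (Commute.sum_left _ _ _ fun m hm => ?_)
        exact Commute.mul_left (hcomm m n (hmem m hm).1 (hmem m hm).2 hn1 hn2).1
          (hcomm m n (hmem m hm).1 (hmem m hm).2 hn1 hn2).2.2.1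
      · refine Commute.add_left (hth1 _) (Commute.sum_left _ _ _ fun m hm => ?_)
        exact Commute.mul_left (hcomm m n (hmem m hm).1 (hmem m hm).2 hn1 hn2).2.1
          (hcomm m n (hmem m hm).1 (hmem m hm).2 hn1 hn2).2.2.2
      · exact Commute.neg_left (Commute.one_left _)
      · exact Commute.neg_left (Commute.one_left _)
    · exact hcomm a n ha1 ha hn1 hn2
  have step2 : ∀ a c, a < L → c < L →
      Commute (Q1 a) (Q2 c) ∧ Commute (Q1 a) (P2 c) ∧
      Commute (P1 a) (Q2 c) ∧ Commute (P1 a) (P2 c) := by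
    intro a c ha hc
    rcases Nat.eq_zero_or_pos c with rfl | hc1
    · rw [hQ20, hP20]
      refine ⟨?_, ?_, ?_, ?_⟩
      · refine Commute.add_right (hth2 _) (Commute.sum_right _ _ _ fun m hm => ?_)
        exact Commute.mul_right (step1 a m ha (hmem m hm).1 (hmem m hm).2).1
          (step1 a m ha (hmem m hm).1 (hmem m hm).2).2.1
      · exact Commute.neg_right (Commute.one_right _)
      · refine Commute.add_right (hth2 _) (Commute.sum_right _ _ _ fun m hm => ?_)
        exact Commute.mul_right (step1 a m ha (hmem m hm).1 (hmem m hm).2).2.2.1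
          (step1 a m ha (hmem m hm).1 (hmem m hm).2).2.2.2
      · exact Commute.neg_right (Commute.one_right _)
    · exact step1 a c ha hc1 hc
  intro a b c d ha hb hc hd
  exact Commute.mul_left
    (Commute.mul_right (step2 a c ha hc).1 (step2 a d ha hd).2.1)
    (Commute.mul_right (step2 b c hb hc).2.2.1 (step2 b d hb hd).2.2.2)


set_option maxHeartbeats 4000000 in

lemma gl_aux {R : Type*} [Ring R] (L : ℕ) (hL : 2 ≤ L) (h θ0 : R)
    (hc : ∀ r : R, h * r = r * h) (hθ : ∀ r : R, θ0 * r = r * θ0)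
    (Q P : ℕ → R)
    (hPQ : ∀ m n, 1 ≤ m → m < L → 1 ≤ n → n < L →
      P m * Q n - Q n * P m = if n = m then h else 0)
    (hQQ : ∀ m n, 1 ≤ m → m < L → 1 ≤ n → n < L → Q m * Q n = Q n * Q m)
    (hPP : ∀ m n, 1 ≤ m → m < L → 1 ≤ n → n < L → P m * P n = P n * P m)
    (hQ0 : Q 0 = θ0 + ∑ m ∈ Finset.Icc 1 (L - 1), Q m * P m)
    (hP0 : P 0 = -1) :
    ∀ a b c d, a < L → b < L → c < L → d < L →
      (Q a * P b) * (Q c * P d) - (Q c * P d) * (Q a * P b)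
        = h * ((if b = c then Q a * P d else 0) - (if d = a then Q c * P b else 0)) := by
  have hmem : ∀ m, m ∈ Finset.Icc 1 (L - 1) → 1 ≤ m ∧ m < L := by
    intro m hm; simp only [Finset.mem_Icc] at hm; omega
  have hPQ' : ∀ m n, 1 ≤ m → m < L → 1 ≤ n → n < L →
      P m * Q n = Q n * P m + (if n = m then h else 0) := by
    intro m n h1 h2 h3 h4
    have := hPQ m n h1 h2 h3 h4
    rw [← this]; abel
  have W : ∀ x y : R, x * (h * y) = h * (x * y) := by
    intro x y; rw [← mul_assoc, ← hc x, mul_assoc]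
  have W2 : ∀ x : R, x * h = h * x := fun x => (hc x).symm
  -- f1 : P b * Q 0 = Q 0 * P b + h * P b
  have f1 : ∀ b, 1 ≤ b → b < L → P b * Q 0 = Q 0 * P b + h * P b := by
    intro b hb1 hb2
    have hbmem : b ∈ Finset.Icc 1 (L - 1) := by simp only [Finset.mem_Icc]; omega
    rw [hQ0]
    have key : ∀ m ∈ Finset.Icc 1 (L - 1),
        P b * (Q m * P m) = (Q m * P m) * P b + (if m = b then h * P m else 0) := by
      intro m hm
      obtain ⟨hm1, hm2⟩ := hmem m hm
      calc P b * (Q m * P m) = (P b * Q m) * P m := by rw [mul_assoc]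
        _ = (Q m * P b + (if m = b then h else 0)) * P m := by
              rw [hPQ' b m hb1 hb2 hm1 hm2]
        _ = Q m * (P b * P m) + (if m = b then h * P m else 0) := by
              rw [add_mul, ite_mul, zero_mul, mul_assoc]
        _ = Q m * (P m * P b) + (if m = b then h * P m else 0) := by
              rw [hPP b m hb1 hb2 hm1 hm2]
        _ = (Q m * P m) * P b + (if m = b then h * P m else 0) := by rw [mul_assoc]
    calc P b * (θ0 + ∑ m ∈ Finset.Icc 1 (L - 1), Q m * P m)
        = θ0 * P b + ∑ m ∈ Finset.Icc 1 (L - 1), P b * (Q m * P m) := by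
          rw [mul_add, Finset.mul_sum, ← hθ (P b)]
      _ = θ0 * P b + (∑ m ∈ Finset.Icc 1 (L - 1), (Q m * P m) * P b
            + ∑ m ∈ Finset.Icc 1 (L - 1), (if m = b then h * P m else 0)) := by
          rw [Finset.sum_congr rfl key, Finset.sum_add_distrib]
      _ = θ0 * P b + ((∑ m ∈ Finset.Icc 1 (L - 1), Q m * P m) * P b + h * P b) := by
          rw [Finset.sum_ite_eq' _ b (fun m => h * P m), if_pos hbmem, Finset.sum_mul]
      _ = (θ0 + ∑ m ∈ Finset.Icc 1 (L - 1), Q m * P m) * P b + h * P b := by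
          rw [add_mul]; abel
  -- f2 : Q c * Q 0 = Q 0 * Q c - h * Q c
  have f2 : ∀ c, 1 ≤ c → c < L → Q c * Q 0 = Q 0 * Q c - h * Q c := by
    intro c hc1 hc2
    have hcmem : c ∈ Finset.Icc 1 (L - 1) := by simp only [Finset.mem_Icc]; omega
    rw [hQ0]
    have key : ∀ m ∈ Finset.Icc 1 (L - 1),
        Q c * (Q m * P m) = (Q m * P m) * Q c - (if c = m then h * Q c else 0) := by
      intro m hm
      obtain ⟨hm1, hm2⟩ := hmem m hm
      have e1 : Q c * P m = P m * Q c - (if c = m then h else 0) := by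
        rw [hPQ' m c hm1 hm2 hc1 hc2]; abel
      calc Q c * (Q m * P m) = (Q c * Q m) * P m := by rw [mul_assoc]
        _ = (Q m * Q c) * P m := by rw [hQQ c m hc1 hc2 hm1 hm2]
        _ = Q m * (Q c * P m) := by rw [mul_assoc]
        _ = Q m * (P m * Q c - (if c = m then h else 0)) := by rw [e1]
        _ = (Q m * P m) * Q c - (if c = m then Q m * h else 0) := by
              rw [mul_sub, mul_ite, mul_zero, mul_assoc]
        _ = (Q m * P m) * Q c - (if c = m then h * Q c else 0) := by
              by_cases hcm : c = m
              · subst hcm; rw [if_pos rfl, if_pos rfl, W2]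
              · rw [if_neg hcm, if_neg hcm]
    calc Q c * (θ0 + ∑ m ∈ Finset.Icc 1 (L - 1), Q m * P m)
        = θ0 * Q c + ∑ m ∈ Finset.Icc 1 (L - 1), Q c * (Q m * P m) := by
          rw [mul_add, Finset.mul_sum, ← hθ (Q c)]
      _ = θ0 * Q c + (∑ m ∈ Finset.Icc 1 (L - 1), (Q m * P m) * Q c
            - ∑ m ∈ Finset.Icc 1 (L - 1), (if c = m then h * Q c else 0)) := by
          rw [Finset.sum_congr rfl key, Finset.sum_sub_distrib]
      _ = θ0 * Q c + ((∑ m ∈ Finset.Icc 1 (L - 1), Q m * P m) * Q c - h * Q c) := by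
          rw [Finset.sum_ite_eq _ c (fun m => h * Q c), if_pos hcmem, Finset.sum_mul]
      _ = (θ0 + ∑ m ∈ Finset.Icc 1 (L - 1), Q m * P m) * Q c - h * Q c := by
          rw [add_mul]; abel
  -- unified bracket lemmas
  have BPP : ∀ b d, b < L → d < L → P b * P d = P d * P b := by
    intro b d hb hd
    rcases Nat.eq_zero_or_pos b with rfl | hb1
    · rw [hP0]; simp [neg_mul, mul_neg]
    · rcases Nat.eq_zero_or_pos d with rfl | hd1
      · rw [hP0]; simp [neg_mul, mul_neg]
      · exact hPP b d hb1 hb hd1 hd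
  have BPQ : ∀ b c, b < L → c < L →
      P b * Q c - Q c * P b
        = (if c = b ∧ b ≠ 0 then h else 0) + (if c = 0 ∧ b ≠ 0 then h * P b else 0) := by
    intro b c hb hc'
    rcases Nat.eq_zero_or_pos b with rfl | hb1
    · simp [hP0]
    · have hb0 : b ≠ 0 := by omega
      rcases Nat.eq_zero_or_pos c with rfl | hc1
      · rw [f1 b hb1 hb]
        have : ¬(0 = b ∧ b ≠ 0) := by omega
        rw [if_neg this, if_pos ⟨rfl, hb0⟩]; abel
      · have hc0 : c ≠ 0 := by omega
        rw [hPQ b c hb1 hb hc1 hc']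
        have h2 : ¬(c = 0 ∧ b ≠ 0) := by omega
        rw [if_neg h2, add_zero]
        by_cases hcb : c = b
        · rw [if_pos hcb, if_pos ⟨hcb, hb0⟩]
        · rw [if_neg hcb, if_neg (by omega : ¬(c = b ∧ b ≠ 0))]
  have BQQ : ∀ a c, a < L → c < L →
      Q a * Q c - Q c * Q a
        = (if a = 0 ∧ c ≠ 0 then h * Q c else 0) - (if c = 0 ∧ a ≠ 0 then h * Q a else 0) := by
    intro a c ha hc'
    rcases Nat.eq_zero_or_pos a with rfl | ha1
    · rcases Nat.eq_zero_or_pos c with rfl | hc1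
      · simp
      · rw [f2 c hc1 hc', if_pos ⟨rfl, by omega⟩, if_neg (by omega : ¬(c = 0 ∧ (0:ℕ) ≠ 0))]
        abel
    · rcases Nat.eq_zero_or_pos c with rfl | hc1
      · rw [f2 a ha1 ha, if_neg (by omega : ¬(a = 0 ∧ (0:ℕ) ≠ 0)), if_pos ⟨rfl, by omega⟩]
        abel
      · rw [hQQ a c ha1 ha hc1 hc', if_neg (by omega : ¬(a = 0 ∧ c ≠ 0)),
          if_neg (by omega : ¬(c = 0 ∧ a ≠ 0))]
        abel
  -- expansion identity
  have expand : ∀ qa pb qc pd : R, pb * pd = pd * pb →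
      (qa * pb) * (qc * pd) - (qc * pd) * (qa * pb)
        = qa * (pb * qc - qc * pb) * pd - qc * (pd * qa - qa * pd) * pb
          + (qa * qc - qc * qa) * (pd * pb) := by
    intro qa pb qc pd hpd
    have key : (qa * pb) * (qc * pd) - (qc * pd) * (qa * pb)
        = qa * (pb * qc - qc * pb) * pd - qc * (pd * qa - qa * pd) * pb
          + (qa * qc - qc * qa) * (pd * pb) + qa * qc * (pb * pd - pd * pb) := by
      noncomm_ring
    rw [key, hpd, sub_self, mul_zero, add_zero]
  intro a b c d ha hb hc' hd
  rw [expand _ _ _ _ (BPP b d hb hd), BPQ b c hb hc', BPQ d a hd ha, BQQ a c ha hc']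
  rcases Nat.eq_zero_or_pos a with rfl | ha1 <;>
  rcases Nat.eq_zero_or_pos b with rfl | hb1 <;>
  rcases Nat.eq_zero_or_pos c with rfl | hc1 <;>
  rcases Nat.eq_zero_or_pos d with rfl | hd1 <;>
  (try simp only [hP0]) <;>
  (try simp only [eq_self_iff_true, true_and, and_true, not_true_eq_false,
    not_false_eq_true, and_false, false_and, if_true, if_false]) <;>
  split_ifs <;>
  first
  | (exfalso; omega)
  | (simp only [mul_assoc, W, W2, mul_neg, neg_mul, mul_zero, zero_mul, mul_one,
      one_mul, sub_zero, zero_sub, add_zero, zero_add, neg_neg, mul_neg_one,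
      neg_one_mul, neg_zero, mul_sub, mul_add]; done)
  | (simp only [mul_assoc, W, W2, mul_neg, neg_mul, mul_zero, zero_mul, mul_one,
      one_mul, sub_zero, zero_sub, add_zero, zero_add, neg_neg, mul_neg_one,
      neg_one_mul, neg_zero, mul_sub, mul_add]; abel1)
  | (simp only [mul_assoc, W, W2, mul_neg, neg_mul, mul_zero, zero_mul, mul_one,
      one_mul, sub_zero, zero_sub, add_zero, zero_add, neg_neg, mul_neg_one,
      neg_one_mul, neg_zero, mul_sub, mul_add]; rw [hPP b d hb1 hb hd1 hd]; first | rfl | abel1)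
  | (simp only [mul_assoc, W, W2, mul_neg, neg_mul, mul_zero, zero_mul, mul_one,
      one_mul, sub_zero, zero_sub, add_zero, zero_add, neg_neg, mul_neg_one,
      neg_one_mul, neg_zero, mul_sub, mul_add]; rw [hPP d b hd1 hd hb1 hb]; first | rfl | abel1)


lemma sum4_swap' {M : Type*} [AddCommMonoid M] (s : Finset ℕ) (f : ℕ → ℕ → ℕ → ℕ → M) :
    (∑ a ∈ s, ∑ b ∈ s, ∑ m ∈ s, ∑ n ∈ s, f a b m n)
      = ∑ m ∈ s, ∑ n ∈ s, ∑ a ∈ s, ∑ b ∈ s, f a b m n := by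
  trans ∑ a ∈ s, ∑ m ∈ s, ∑ b ∈ s, ∑ n ∈ s, f a b m n
  · exact Finset.sum_congr rfl fun a _ => Finset.sum_comm
  trans ∑ m ∈ s, ∑ a ∈ s, ∑ b ∈ s, ∑ n ∈ s, f a b m n
  · exact Finset.sum_comm
  trans ∑ m ∈ s, ∑ a ∈ s, ∑ n ∈ s, ∑ b ∈ s, f a b m n
  · exact Finset.sum_congr rfl fun m _ => Finset.sum_congr rfl fun a _ => Finset.sum_comm
  · exact Finset.sum_congr rfl fun m _ => Finset.sum_comm

lemma sum3_swap13' {M : Type*} [AddCommMonoid M] (s : Finset ℕ) (f : ℕ → ℕ → ℕ → M) :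
    (∑ m ∈ s, ∑ n ∈ s, ∑ a ∈ s, f m n a) = ∑ a ∈ s, ∑ n ∈ s, ∑ m ∈ s, f m n a := by
  trans ∑ m ∈ s, ∑ a ∈ s, ∑ n ∈ s, f m n a
  · exact Finset.sum_congr rfl fun m _ => Finset.sum_comm
  trans ∑ a ∈ s, ∑ m ∈ s, ∑ n ∈ s, f m n a
  · exact Finset.sum_comm
  · exact Finset.sum_congr rfl fun a _ => Finset.sum_comm

set_option maxHeartbeats 2000000 in
lemma braid_aux {R : Type*} [Ring R] (L : ℕ) (h : R)
    (W : ∀ x y : R, x * (h * y) = h * (x * y))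
    (Ei Ej Ek : ℕ → ℕ → R)
    (cij : ∀ a b c d, a < L → b < L → c < L → d < L → Commute (Ei a b) (Ej c d))
    (cik : ∀ a b c d, a < L → b < L → c < L → d < L → Commute (Ei a b) (Ek c d))
    (cjk : ∀ a b c d, a < L → b < L → c < L → d < L → Commute (Ej a b) (Ek c d))
    (gli : ∀ a b c d, a < L → b < L → c < L → d < L →
      Ei a b * Ei c d - Ei c d * Ei a b
        = h * ((if b = c then Ei a d else 0) - (if d = a then Ei c b else 0)))
    (glj : ∀ a b c d, a < L → b < L → c < L → d < L →
      Ej a b * Ej c d - Ej c d * Ej a b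
        = h * ((if b = c then Ej a d else 0) - (if d = a then Ej c b else 0))) :
    (∑ m ∈ Finset.range L, ∑ n ∈ Finset.range L, Ei m n * Ej n m) *
      ((∑ m ∈ Finset.range L, ∑ n ∈ Finset.range L, Ei m n * Ek n m)
        + (∑ m ∈ Finset.range L, ∑ n ∈ Finset.range L, Ek m n * Ej n m))
    = ((∑ m ∈ Finset.range L, ∑ n ∈ Finset.range L, Ei m n * Ek n m)
        + (∑ m ∈ Finset.range L, ∑ n ∈ Finset.range L, Ek m n * Ej n m)) *
      (∑ m ∈ Finset.range L, ∑ n ∈ Finset.range L, Ei m n * Ej n m) := by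
  set s := Finset.range L with hs
  have hlt : ∀ {x : ℕ}, x ∈ s → x < L := fun hx => Finset.mem_range.mp hx
  set AIJ := ∑ m ∈ s, ∑ n ∈ s, Ei m n * Ej n m with hAIJ
  set AIK := ∑ m ∈ s, ∑ n ∈ s, Ei m n * Ek n m with hAIK
  set AKJ := ∑ m ∈ s, ∑ n ∈ s, Ek m n * Ej n m with hAKJ
  set S1 := ∑ x ∈ s, ∑ y ∈ s, ∑ z ∈ s, h * (Ei x y * (Ej z x * Ek y z)) with hS1
  set S2 := ∑ x ∈ s, ∑ y ∈ s, ∑ z ∈ s, h * (Ei x y * (Ej y z * Ek z x)) with hS2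
  -- D1 : [AIJ, AIK] = S1 - S2
  have e1 : AIJ * AIK = ∑ m ∈ s, ∑ n ∈ s, ∑ a ∈ s, ∑ b ∈ s,
      (Ei m n * Ei a b) * (Ej n m * Ek b a) := by
    rw [hAIJ, hAIK]
    simp only [Finset.sum_mul]
    simp only [Finset.mul_sum]
    refine Finset.sum_congr rfl fun m hm => Finset.sum_congr rfl fun n hn =>
      Finset.sum_congr rfl fun a ha => Finset.sum_congr rfl fun b hb => ?_
    exact ((cij a b n m (hlt ha) (hlt hb) (hlt hn) (hlt hm)).symm).mul_mul_mul_comm _ _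
  have e2 : AIK * AIJ = ∑ m ∈ s, ∑ n ∈ s, ∑ a ∈ s, ∑ b ∈ s,
      (Ei a b * Ei m n) * (Ej n m * Ek b a) := by
    rw [hAIK, hAIJ]
    simp only [Finset.sum_mul]
    simp only [Finset.mul_sum]
    rw [← sum4_swap' s (fun a b m n => (Ei a b * Ei m n) * (Ej n m * Ek b a))]
    refine Finset.sum_congr rfl fun a ha => Finset.sum_congr rfl fun b hb =>
      Finset.sum_congr rfl fun m hm => Finset.sum_congr rfl fun n hn => ?_
    calc (Ei a b * Ek b a) * (Ei m n * Ej n m)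
        = (Ei a b * Ei m n) * (Ek b a * Ej n m) :=
          ((cik m n b a (hlt hm) (hlt hn) (hlt hb) (hlt ha)).symm).mul_mul_mul_comm _ _
      _ = (Ei a b * Ei m n) * (Ej n m * Ek b a) := by
          rw [(cjk n m b a (hlt hn) (hlt hm) (hlt hb) (hlt ha)).eq.symm]
  have D1 : AIJ * AIK - AIK * AIJ = S1 - S2 := by
    rw [e1, e2]
    simp only [← Finset.sum_sub_distrib]
    have point : ∀ m ∈ s, ∀ n ∈ s, ∀ a ∈ s, ∀ b ∈ s,
        (Ei m n * Ei a b) * (Ej n m * Ek b a) - (Ei a b * Ei m n) * (Ej n m * Ek b a)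
          = (if n = a then h * (Ei m b * (Ej n m * Ek b a)) else 0)
            - (if b = m then h * (Ei a n * (Ej n m * Ek b a)) else 0) := by
      intro m hm n hn a ha b hb
      rw [← sub_mul, gli m n a b (hlt hm) (hlt hn) (hlt ha) (hlt hb)]
      split_ifs <;> noncomm_ring
    rw [Finset.sum_congr rfl fun m hm => Finset.sum_congr rfl fun n hn =>
      Finset.sum_congr rfl fun a ha => Finset.sum_congr rfl fun b hb =>
        point m hm n hn a ha b hb]
    simp only [Finset.sum_sub_distrib]
    congr 1
    · -- contract n = a
      refine Finset.sum_congr rfl fun m hm => ?_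
      calc ∑ n ∈ s, ∑ a ∈ s, ∑ b ∈ s,
            (if n = a then h * (Ei m b * (Ej n m * Ek b a)) else 0)
          = ∑ n ∈ s, ∑ b ∈ s, ∑ a ∈ s,
            (if n = a then h * (Ei m b * (Ej n m * Ek b a)) else 0) :=
            Finset.sum_congr rfl fun n _ => Finset.sum_comm
        _ = ∑ n ∈ s, ∑ b ∈ s, h * (Ei m b * (Ej n m * Ek b n)) := by
            refine Finset.sum_congr rfl fun n hn => Finset.sum_congr rfl fun b hb => ?_
            rw [Finset.sum_ite_eq s n (fun a => h * (Ei m b * (Ej n m * Ek b a))), if_pos hn]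
        _ = ∑ y ∈ s, ∑ z ∈ s, h * (Ei m y * (Ej z m * Ek y z)) := Finset.sum_comm
    · -- contract b = m
      calc ∑ m ∈ s, ∑ n ∈ s, ∑ a ∈ s, ∑ b ∈ s,
            (if b = m then h * (Ei a n * (Ej n m * Ek b a)) else 0)
          = ∑ m ∈ s, ∑ n ∈ s, ∑ a ∈ s, h * (Ei a n * (Ej n m * Ek m a)) := by
            refine Finset.sum_congr rfl fun m hm => Finset.sum_congr rfl fun n _ =>
              Finset.sum_congr rfl fun a _ => ?_
            rw [Finset.sum_ite_eq' s m (fun b => h * (Ei a n * (Ej n m * Ek b a))), if_pos hm]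
        _ = ∑ a ∈ s, ∑ n ∈ s, ∑ m ∈ s, h * (Ei a n * (Ej n m * Ek m a)) :=
            sum3_swap13' s _
        _ = S2 := rfl
  -- D2 : [AIJ, AKJ] = S2 - S1
  have e1' : AIJ * AKJ = ∑ m ∈ s, ∑ n ∈ s, ∑ a ∈ s, ∑ b ∈ s,
      (Ei m n * Ek a b) * (Ej n m * Ej b a) := by
    rw [hAIJ, hAKJ]
    simp only [Finset.sum_mul]
    simp only [Finset.mul_sum]
    refine Finset.sum_congr rfl fun m hm => Finset.sum_congr rfl fun n hn =>
      Finset.sum_congr rfl fun a ha => Finset.sum_congr rfl fun b hb => ?_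
    exact (cjk n m a b (hlt hn) (hlt hm) (hlt ha) (hlt hb)).mul_mul_mul_comm _ _
  have e2' : AKJ * AIJ = ∑ m ∈ s, ∑ n ∈ s, ∑ a ∈ s, ∑ b ∈ s,
      (Ei m n * Ek a b) * (Ej b a * Ej n m) := by
    rw [hAKJ, hAIJ]
    simp only [Finset.sum_mul]
    simp only [Finset.mul_sum]
    rw [← sum4_swap' s (fun a b m n => (Ei m n * Ek a b) * (Ej b a * Ej n m))]
    refine Finset.sum_congr rfl fun a ha => Finset.sum_congr rfl fun b hb =>
      Finset.sum_congr rfl fun m hm => Finset.sum_congr rfl fun n hn => ?_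
    calc (Ek a b * Ej b a) * (Ei m n * Ej n m)
        = (Ek a b * Ei m n) * (Ej b a * Ej n m) :=
          ((cij m n b a (hlt hm) (hlt hn) (hlt hb) (hlt ha)).symm).mul_mul_mul_comm _ _
      _ = (Ei m n * Ek a b) * (Ej b a * Ej n m) := by
          rw [(cik m n a b (hlt hm) (hlt hn) (hlt ha) (hlt hb)).eq.symm]
  have D2 : AIJ * AKJ - AKJ * AIJ = S2 - S1 := by
    rw [e1', e2']
    simp only [← Finset.sum_sub_distrib]
    have point : ∀ m ∈ s, ∀ n ∈ s, ∀ a ∈ s, ∀ b ∈ s,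
        (Ei m n * Ek a b) * (Ej n m * Ej b a) - (Ei m n * Ek a b) * (Ej b a * Ej n m)
          = (if m = b then h * (Ei m n * (Ej n a * Ek a b)) else 0)
            - (if a = n then h * (Ei m n * (Ej b m * Ek a b)) else 0) := by
      intro m hm n hn a ha b hb
      rw [← mul_sub, glj n m b a (hlt hn) (hlt hm) (hlt hb) (hlt ha)]
      have s1 : Ek a b * Ej n a = Ej n a * Ek a b :=
        ((cjk n a a b (hlt hn) (hlt ha) (hlt ha) (hlt hb)).symm).eq
      have s2 : Ek a b * Ej b m = Ej b m * Ek a b :=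
        ((cjk b m a b (hlt hb) (hlt hm) (hlt ha) (hlt hb)).symm).eq
      split_ifs <;>
        simp only [mul_sub, sub_zero, zero_sub, mul_zero, mul_neg, W, mul_assoc, s1, s2,
          sub_self, neg_zero]
    rw [Finset.sum_congr rfl fun m hm => Finset.sum_congr rfl fun n hn =>
      Finset.sum_congr rfl fun a ha => Finset.sum_congr rfl fun b hb =>
        point m hm n hn a ha b hb]
    simp only [Finset.sum_sub_distrib]
    congr 1
    · -- contract m = b : gives S2
      refine Finset.sum_congr rfl fun m hm => ?_
      refine Finset.sum_congr rfl fun n hn => ?_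
      refine Finset.sum_congr rfl fun a ha => ?_
      rw [Finset.sum_ite_eq s m (fun b => h * (Ei m n * (Ej n a * Ek a b))), if_pos hm]
    · -- contract a = n : gives S1
      refine Finset.sum_congr rfl fun m hm => ?_
      calc ∑ n ∈ s, ∑ a ∈ s, ∑ b ∈ s,
            (if a = n then h * (Ei m n * (Ej b m * Ek a b)) else 0)
          = ∑ n ∈ s, ∑ b ∈ s, ∑ a ∈ s,
            (if a = n then h * (Ei m n * (Ej b m * Ek a b)) else 0) :=
            Finset.sum_congr rfl fun n _ => Finset.sum_comm
        _ = ∑ n ∈ s, ∑ b ∈ s, h * (Ei m n * (Ej b m * Ek n b)) := by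
            refine Finset.sum_congr rfl fun n hn => Finset.sum_congr rfl fun b hb => ?_
            rw [Finset.sum_ite_eq' s n (fun a => h * (Ei m n * (Ej b m * Ek a b))), if_pos hn]
        _ = ∑ y ∈ s, ∑ z ∈ s, h * (Ei m y * (Ej z m * Ek y z)) := rfl
  have final : AIJ * (AIK + AKJ) - (AIK + AKJ) * AIJ = 0 := by
    have expand : AIJ * (AIK + AKJ) - (AIK + AKJ) * AIJ
        = (AIJ * AIK - AIK * AIJ) + (AIJ * AKJ - AKJ * AIJ) := by noncomm_ring
    rw [expand, D1, D2]
    abel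
  have := sub_eq_zero.mp final
  exact this


set_option maxHeartbeats 1000000 in
theorem stmt2 {R : Type*} [Ring R] [Algebra ℂ R]
    (L N : ℕ) (hL : 2 ≤ L) (hN : 1 ≤ N)
    (hbar : R) (e κ θ : ℕ → R) (q p : ℕ → ℕ → R)
    (hbar_central : ∀ r : R, hbar * r = r * hbar)
    (he_central : ∀ n, n ≤ L - 1 → ∀ r : R, e n * r = r * e n)
    (hκ_central : ∀ n, n ≤ L - 1 → ∀ r : R, κ n * r = r * κ n)
    (hθ_central : ∀ j, j ≤ N → ∀ r : R, θ j * r = r * θ j)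
    (he_sum : ∑ m ∈ Finset.range L, e m = algebraMap ℂ R (((L : ℂ) - 1) / 2))
    (hκ_sum : ∑ m ∈ Finset.range L, κ m = ∑ i ∈ Finset.range (N + 1), θ i)
    (hpq : ∀ m n i j, 1 ≤ m → m ≤ L - 1 → 1 ≤ n → n ≤ L - 1 →
      1 ≤ i → i ≤ N → 1 ≤ j → j ≤ N →
      p m j * q n i - q n i * p m j = if n = m ∧ i = j then hbar else 0)
    (hqq : ∀ m n i j, 1 ≤ m → m ≤ L - 1 → 1 ≤ n → n ≤ L - 1 →
      1 ≤ i → i ≤ N → 1 ≤ j → j ≤ N → q m i * q n j = q n j * q m i)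
    (hpp : ∀ m n i j, 1 ≤ m → m ≤ L - 1 → 1 ≤ n → n ≤ L - 1 →
      1 ≤ i → i ≤ N → 1 ≤ j → j ≤ N → p m i * p n j = p n j * p m i)
    (hq0 : ∀ i, 1 ≤ i → i ≤ N →
      q 0 i = θ i + ∑ m ∈ Finset.Icc 1 (L - 1), q m i * p m i)
    (hp0 : ∀ i, 1 ≤ i → i ≤ N → p 0 i = -1)
    (Ω : ℕ → ℕ → R)
    (hΩ : ∀ i j, 1 ≤ i → i ≤ N → 1 ≤ j → j ≤ N →
      Ω i j = ((1 : ℂ) / 2) • ∑ m ∈ Finset.range L, ∑ n ∈ Finset.range L,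
        q m i * p n i * (q n j * p m j))
    :
    ∀ i j k, 1 ≤ i → i ≤ N → 1 ≤ j → j ≤ N → 1 ≤ k → k ≤ N →
      i ≠ j → i ≠ k → j ≠ k →
      Ω i j * (Ω i k + Ω k j) = (Ω i k + Ω k j) * Ω i j := by
  intro i j k hi1 hi2 hj1 hj2 hk1 hk2 hij hik hjk
  have W : ∀ x y : R, x * (hbar * y) = hbar * (x * y) := by
    intro x y; rw [← mul_assoc, ← hbar_central x, mul_assoc]
  -- gl relation for each particle index
  have glt : ∀ t, 1 ≤ t → t ≤ N → ∀ a b c d, a < L → b < L → c < L → d < L →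
      (q a t * p b t) * (q c t * p d t) - (q c t * p d t) * (q a t * p b t)
        = hbar * ((if b = c then q a t * p d t else 0)
            - (if d = a then q c t * p b t else 0)) := by
    intro t ht1 ht2
    refine gl_aux L hL hbar (θ t) hbar_central (hθ_central t ht2)
      (fun a => q a t) (fun a => p a t) ?_ ?_ ?_ (hq0 t ht1 ht2) (hp0 t ht1 ht2)
    · intro m n h1 h2 h3 h4
      have h0 := hpq m n t t h1 (by omega) h3 (by omega) ht1 ht2 ht1 ht2
      simpa using h0
    · intro m n h1 h2 h3 h4
      exact hqq m n t t h1 (by omega) h3 (by omega) ht1 ht2 ht1 ht2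
    · intro m n h1 h2 h3 h4
      exact hpp m n t t h1 (by omega) h3 (by omega) ht1 ht2 ht1 ht2
  -- cross commutation for distinct particle indices
  have crosst : ∀ t u, 1 ≤ t → t ≤ N → 1 ≤ u → u ≤ N → t ≠ u →
      ∀ a b c d, a < L → b < L → c < L → d < L →
        Commute (q a t * p b t) (q c u * p d u) := by
    intro t u ht1 ht2 hu1 hu2 htu
    refine cross_aux L hL (θ t) (θ u) (hθ_central t ht2) (hθ_central u hu2)
      (fun a => q a t) (fun a => p a t) (fun a => q a u) (fun a => p a u) ?_
      (hq0 t ht1 ht2) (hp0 t ht1 ht2) (hq0 u hu1 hu2) (hp0 u hu1 hu2)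
    intro m n h1 h2 h3 h4
    refine ⟨?_, ?_, ?_, ?_⟩
    · exact hqq m n t u h1 (by omega) h3 (by omega) ht1 ht2 hu1 hu2
    · have h0 := hpq n m t u h3 (by omega) h1 (by omega) ht1 ht2 hu1 hu2
      rw [if_neg (fun hh => htu hh.2)] at h0
      exact (sub_eq_zero.mp h0).symm
    · have h0 := hpq m n u t h1 (by omega) h3 (by omega) hu1 hu2 ht1 ht2
      rw [if_neg (fun hh => htu hh.2.symm)] at h0
      exact sub_eq_zero.mp h0
    · exact hpp m n t u h1 (by omega) h3 (by omega) ht1 ht2 hu1 hu2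
  have B := braid_aux L hbar W
    (fun a b => q a i * p b i) (fun a b => q a j * p b j) (fun a b => q a k * p b k)
    (fun a b c d ha hb hc hd => crosst i j hi1 hi2 hj1 hj2 hij a b c d ha hb hc hd)
    (fun a b c d ha hb hc hd => crosst i k hi1 hi2 hk1 hk2 hik a b c d ha hb hc hd)
    (fun a b c d ha hb hc hd => crosst j k hj1 hj2 hk1 hk2 hjk a b c d ha hb hc hd)
    (fun a b c d ha hb hc hd => glt i hi1 hi2 a b c d ha hb hc hd)
    (fun a b c d ha hb hc hd => glt j hj1 hj2 a b c d ha hb hc hd)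
  rw [hΩ i j hi1 hi2 hj1 hj2, hΩ i k hi1 hi2 hk1 hk2, hΩ k j hk1 hk2 hj1 hj2]
  rw [← smul_add, smul_mul_assoc, smul_mul_assoc, mul_smul_comm, mul_smul_comm]
  rw [B]
end

section
/- Suppose κ_0 − Σ_{i=1}^{N} θ_i = M for some nonnegative integer M. Then for each 1 ≤ i ≤ N the Hamiltonian operator H_i preserves the subspace V(M) of ℂ[q] consisting of polynomials of total degree at most M: if P ∈ ℂ[q] has total degree ≤ M, then H_i P has total degree ≤ M. -/
/-!
Statement 6: if `κ₀ - Σ θᵢ = M`, each Hamiltonian operator `H i` preserves the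
space of polynomials of total degree at most `M`.

The variable `q_m^{(i)}` (for `1 ≤ m ≤ L-1`, `1 ≤ i ≤ N`) is the `MvPolynomial`
variable with index `(⟨m-1⟩, ⟨i-1⟩) : Fin (L-1) × Fin N`.
-/


set_option linter.unusedSectionVars false
namespace Stmt6Aux
open MvPolynomial

variable {σ : Type*} [DecidableEq σ]

noncomputable abbrev Vd (σ : Type*) (d : ℕ) : Submodule ℂ (MvPolynomial σ ℂ) :=
  MvPolynomial.restrictTotalDegree σ ℂ d

theorem mem_Vd {p : MvPolynomial σ ℂ} {d : ℕ} : p ∈ Vd σ d ↔ p.totalDegree ≤ d :=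
  MvPolynomial.mem_restrictTotalDegree σ d p

theorem Vd_mono {d d' : ℕ} (h : d ≤ d') : Vd σ d ≤ Vd σ d' := by
  intro p hp; rw [mem_Vd] at *; omega

theorem X_mul_mem {f : MvPolynomial σ ℂ} {d : ℕ} (v : σ) (hf : f ∈ Vd σ d) :
    X v * f ∈ Vd σ (d + 1) := by
  rw [mem_Vd] at *
  refine le_trans (totalDegree_mul _ _) ?_
  rw [totalDegree_X]
  omega

theorem pderiv_monomial_mem {s : σ →₀ ℕ} {a : ℂ} (v : σ) (d : ℕ)
    (hs : (s.sum fun _ e => e) ≤ d + 1) :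
    pderiv v (monomial s a) ∈ Vd σ d := by
  rw [pderiv_monomial]
  rcases Nat.eq_zero_or_pos (s v) with h | h
  · simp [h]
  · rw [mem_Vd]
    refine le_trans (totalDegree_monomial_le _ _) ?_
    show ((s - Finsupp.single v 1).sum fun _ e => e) ≤ d
    have h1 : s - Finsupp.single v 1 + Finsupp.single v 1 = s := by
      ext x
      rcases eq_or_ne x v with rfl | hx
      · simp [Finsupp.single_apply]; omega
      · simp [Finsupp.single_apply, hx.symm, Ne.symm hx]
    have h2 : ((s - Finsupp.single v 1).sum fun _ e => e) + 1 = s.sum fun _ e => e := by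
      conv_rhs => rw [← h1]
      rw [Finsupp.sum_add_index' (fun _ => rfl) (fun _ _ _ => rfl)]
      simp [Finsupp.sum_single_index]
    omega

theorem pderiv_mem_of_le {f : MvPolynomial σ ℂ} {d : ℕ} (v : σ) (hf : f ∈ Vd σ (d + 1)) :
    pderiv v f ∈ Vd σ d := by
  rw [mem_Vd] at hf
  rw [f.as_sum, map_sum]
  exact Submodule.sum_mem _ fun s hs =>
    pderiv_monomial_mem v d (le_trans (le_totalDegree hs) hf)

theorem pderiv_mem {f : MvPolynomial σ ℂ} {d : ℕ} (v : σ) (hf : f ∈ Vd σ d) :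
    pderiv v f ∈ Vd σ d :=
  pderiv_mem_of_le v (Vd_mono (Nat.le_succ d) hf)

theorem pderiv_eq_zero {f : MvPolynomial σ ℂ} (v : σ) (hf : f ∈ Vd σ 0) :
    pderiv v f = 0 := by
  rw [mem_Vd, Nat.le_zero] at hf
  conv_lhs => rw [f.as_sum]
  rw [map_sum]
  refine Finset.sum_eq_zero fun s hs => ?_
  have h0 : s v = 0 := by
    have := le_trans (le_totalDegree hs) hf.le
    rw [Nat.le_zero, Finsupp.sum, Finset.sum_eq_zero_iff] at this
    by_cases hv : v ∈ s.support
    · exact this v hv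
    · exact Finsupp.notMem_support_iff.mp hv
  rw [pderiv_monomial, h0]
  simp

theorem X_pderiv_mem {f : MvPolynomial σ ℂ} {d : ℕ} (u v : σ) (hf : f ∈ Vd σ d) :
    X u * pderiv v f ∈ Vd σ d := by
  cases d with
  | zero => rw [pderiv_eq_zero v hf]; simp
  | succ d => exact X_mul_mem u (pderiv_mem_of_le v hf)


/-- `T` preserves every degree-truncation submodule. -/
def Good (T : Module.End ℂ (MvPolynomial σ ℂ)) : Prop :=
  ∀ (d : ℕ) (f : MvPolynomial σ ℂ), f ∈ Vd σ d → T f ∈ Vd σ d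

theorem good_one : Good (1 : Module.End ℂ (MvPolynomial σ ℂ)) := fun _ _ hf => hf

theorem good_neg {T} (hT : Good (σ := σ) T) : Good (-T) := fun d f hf => by
  rw [LinearMap.neg_apply]; exact neg_mem (hT d f hf)

theorem good_neg_one : Good (-1 : Module.End ℂ (MvPolynomial σ ℂ)) := good_neg good_one

theorem good_smul (c : ℂ) {T} (hT : Good (σ := σ) T) : Good (c • T) := fun d f hf => by
  rw [LinearMap.smul_apply]; exact Submodule.smul_mem _ _ (hT d f hf)

theorem good_add {T S} (hT : Good (σ := σ) T) (hS : Good S) : Good (T + S) := fun d f hf => by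
  rw [LinearMap.add_apply]; exact add_mem (hT d f hf) (hS d f hf)

theorem good_sub {T S} (hT : Good (σ := σ) T) (hS : Good S) : Good (T - S) := fun d f hf => by
  rw [LinearMap.sub_apply]; exact sub_mem (hT d f hf) (hS d f hf)

theorem good_sum {ι : Type*} (s : Finset ι) (T : ι → Module.End ℂ (MvPolynomial σ ℂ))
    (hT : ∀ i ∈ s, Good (T i)) : Good (∑ i ∈ s, T i) := fun d f hf => by
  rw [LinearMap.sum_apply]; exact Submodule.sum_mem _ fun i hi => hT i hi d f hf

theorem good_mul {T S} (hT : Good (σ := σ) T) (hS : Good S) : Good (T * S) := fun d f hf =>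
  hT d _ (hS d f hf)

theorem good_X_pderiv (u v : σ) :
    Good (LinearMap.mulLeft ℂ (X u) * ((pderiv v).toLinearMap
      : Module.End ℂ (MvPolynomial σ ℂ))) := fun d f hf => by
  simp only [Module.End.mul_apply, LinearMap.mulLeft_apply]
  exact X_pderiv_mem u v hf

theorem good_pderiv (v : σ) :
    Good (((pderiv v).toLinearMap : Module.End ℂ (MvPolynomial σ ℂ))) := fun d f hf =>
  pderiv_mem v hf

theorem good_pderiv_X (u v : σ) :
    Good (((pderiv u).toLinearMap : Module.End ℂ (MvPolynomial σ ℂ))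
      * LinearMap.mulLeft ℂ (X v)) := fun d f hf => by
  simp only [Module.End.mul_apply, LinearMap.mulLeft_apply]
  exact pderiv_mem_of_le u (X_mul_mem v hf)

theorem chainX {T : Module.End ℂ (MvPolynomial σ ℂ)} (hT : Good T) (u v : σ)
    {d : ℕ} {f : MvPolynomial σ ℂ} (hf : f ∈ Vd σ d) :
    X u * T (pderiv v f) ∈ Vd σ d := by
  cases d with
  | zero => rw [pderiv_eq_zero v hf, map_zero, mul_zero]; exact zero_mem _
  | succ d => exact X_mul_mem u (hT d _ (pderiv_mem_of_le v hf))

section Euler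
variable [Fintype σ]

theorem euler_monomial (s : σ →₀ ℕ) (a : ℂ) :
    ∑ v : σ, X v * pderiv v (monomial s a) =
      monomial s ((((s.sum fun _ e => e : ℕ)) : ℂ) * a) := by
  have hv : ∀ v : σ, X v * pderiv v (monomial s a) = monomial s ((s v : ℂ) * a) := by
    intro v
    rw [pderiv_monomial]
    rcases Nat.eq_zero_or_pos (s v) with h | h
    · simp [h]
    · have hX : (X v : MvPolynomial σ ℂ) = monomial (Finsupp.single v 1) 1 := rfl
      rw [hX, monomial_mul]
      have h1 : Finsupp.single v 1 + (s - Finsupp.single v 1) = s := by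
        ext x
        rcases eq_or_ne x v with rfl | hx
        · simp [Finsupp.single_apply]; omega
        · simp [Finsupp.single_apply, hx.symm, Ne.symm hx]
      rw [h1]
      ring_nf
  rw [Finset.sum_congr rfl fun v _ => hv v, ← map_sum, ← Finset.sum_mul]
  have hcast : ((s.sum fun _ e => e : ℕ) : ℂ) = ∑ v : σ, (s v : ℂ) := by
    rw [Finsupp.sum, Nat.cast_sum]
    exact Finset.sum_subset (Finset.subset_univ _)
      (fun x _ hx => by simp [Finsupp.notMem_support_iff.mp hx])
  rw [hcast]

theorem euler_sub_mem {f : MvPolynomial σ ℂ} {M : ℕ} (hf : f ∈ Vd σ M) :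
    (∑ v : σ, X v * pderiv v f) - (M : ℂ) • f ∈ Vd σ (M - 1) := by
  have hf' := mem_Vd.mp hf
  have hrw : (∑ v : σ, X v * pderiv v f) - (M : ℂ) • f =
      ∑ s ∈ f.support, ((∑ v : σ, X v * pderiv v (monomial s (coeff s f)))
        - (M : ℂ) • monomial s (coeff s f)) := by
    rw [Finset.sum_sub_distrib, ← Finset.smul_sum, ← f.as_sum]
    congr 1
    conv_lhs => rw [f.as_sum]
    simp only [map_sum, Finset.mul_sum]
    exact Finset.sum_comm
  rw [hrw]
  refine Submodule.sum_mem _ fun s hs => ?_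
  have hdeg : (s.sum fun _ e => e) ≤ M := le_trans (le_totalDegree hs) hf'
  rw [euler_monomial, smul_monomial, smul_eq_mul, ← map_sub, ← sub_mul]
  rcases eq_or_lt_of_le hdeg with h | h
  · rw [h]; simp
  · rw [mem_Vd]
    refine le_trans (totalDegree_monomial_le _ _) ?_
    show (s.sum fun _ e => e) ≤ M - 1
    omega

end Euler

theorem sum_Icc_one_eq_fin {A : Type*} [AddCommMonoid A] (n : ℕ) (h : ℕ → A) :
    ∑ m ∈ Finset.Icc 1 n, h m = ∑ a : Fin n, h (a.val + 1) := by
  rw [Fin.sum_univ_eq_sum_range (fun k => h (k + 1)) n]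
  refine Finset.sum_nbij' (fun m => m - 1) (fun k => k + 1) ?_ ?_ ?_ ?_ ?_ <;>
      intro a ha <;> simp only [Finset.mem_Icc, Finset.mem_range] at * <;> try omega
  congr 1
  omega

theorem range_eq_insert_Icc {L : ℕ} (hL : 1 ≤ L) :
    Finset.range L = insert 0 (Finset.Icc 1 (L - 1)) := by
  ext x
  simp only [Finset.mem_range, Finset.mem_insert, Finset.mem_Icc]
  omega

end Stmt6Aux

open Stmt6Aux in
theorem stmt6 (L N : ℕ) (hL : 2 ≤ L) (hN : 1 ≤ N)
    (e κ θ : ℕ → ℂ)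
    (he_sum : ∑ m ∈ Finset.range L, e m = ((L : ℂ) - 1) / 2)
    (hκ_sum : ∑ m ∈ Finset.range L, κ m = ∑ i ∈ Finset.range (N + 1), θ i)
    (z : ℕ → ℂ)
    (hz_distinct : ∀ i j, 1 ≤ i → i ≤ N → 1 ≤ j → j ≤ N → i ≠ j → z i ≠ z j)
    (hz0 : ∀ i, 1 ≤ i → i ≤ N → z i ≠ 0)
    (hz1 : ∀ i, 1 ≤ i → i ≤ N → z i ≠ 1)
    (Q P : ℕ → ℕ → Module.End ℂ (MvPolynomial (Fin (L - 1) × Fin N) ℂ))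
    (hQ : ∀ m i, ∀ hm : 1 ≤ m ∧ m ≤ L - 1, ∀ hi : 1 ≤ i ∧ i ≤ N,
      Q m i = LinearMap.mulLeft ℂ
        (MvPolynomial.X (⟨m - 1, by omega⟩, ⟨i - 1, by omega⟩)))
    (hP : ∀ m i, ∀ hm : 1 ≤ m ∧ m ≤ L - 1, ∀ hi : 1 ≤ i ∧ i ≤ N,
      P m i = (MvPolynomial.pderiv (⟨m - 1, by omega⟩, ⟨i - 1, by omega⟩)).toLinearMap)
    (hQ0 : ∀ i, 1 ≤ i → i ≤ N →
      Q 0 i = θ i • (1 : Module.End ℂ (MvPolynomial (Fin (L - 1) × Fin N) ℂ))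
        + ∑ m ∈ Finset.Icc 1 (L - 1), Q m i * P m i)
    (hP0 : ∀ i, 1 ≤ i → i ≤ N → P 0 i = -1)
    (hQm0 : ∀ m, 1 ≤ m → m ≤ L - 1 → Q m 0 = -1)
    (hPm0 : ∀ m, 1 ≤ m → m ≤ L - 1 →
      P m 0 = κ m • (1 : Module.End ℂ (MvPolynomial (Fin (L - 1) × Fin N) ℂ))
        + ∑ i ∈ Finset.Icc 1 N, Q m i * P m i)
    (hQ00 : Q 0 0 = (κ 0 - ∑ i ∈ Finset.Icc 1 N, θ i) •
        (1 : Module.End ℂ (MvPolynomial (Fin (L - 1) × Fin N) ℂ))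
      - ∑ i ∈ Finset.Icc 1 N, ∑ m ∈ Finset.Icc 1 (L - 1), Q m i * P m i)
    (hP00 : P 0 0 = -1)
    (H : ℕ → Module.End ℂ (MvPolynomial (Fin (L - 1) × Fin N) ℂ))
    (hH : ∀ i, 1 ≤ i → i ≤ N → z i • H i =
      (∑ n ∈ Finset.range L, e n • (Q n i * P n i))
      + (∑ j ∈ Finset.range (N + 1), ∑ n ∈ Finset.range L, ∑ m ∈ Finset.range n,
          Q m i * P m j * Q n j * P n i)
      + (z i - 1)⁻¹ • (∑ m ∈ Finset.range L, ∑ n ∈ Finset.range L,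
          Q m i * P m 0 * Q n 0 * P n i)
      + (∑ j ∈ (Finset.Icc 1 N).erase i, (z j / (z i - z j)) •
          (∑ m ∈ Finset.range L, ∑ n ∈ Finset.range L, Q m i * P n i * Q n j * P m j))
      + (θ i * (e 0 + κ 0 - (∑ j ∈ Finset.Icc 1 N, θ j)
          - ∑ j ∈ (Finset.Icc 1 N).erase i, θ j * z j / (z i - z j))) •
          (1 : Module.End ℂ (MvPolynomial (Fin (L - 1) × Fin N) ℂ)))
    (M : ℕ) (hM : κ 0 - ∑ i ∈ Finset.Icc 1 N, θ i = (M : ℂ)) :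
    ∀ i, 1 ≤ i → i ≤ N → ∀ f : MvPolynomial (Fin (L - 1) × Fin N) ℂ,
      f.totalDegree ≤ M → (H i f).totalDegree ≤ M := by
  intro i hi1 hiN f hf
  classical
  have hf' : f ∈ Vd (Fin (L - 1) × Fin N) M := mem_Vd.mpr hf
  -- goodness of the various operators
  have goodQP : ∀ m j, 1 ≤ m → m ≤ L - 1 → 1 ≤ j → j ≤ N → Good (Q m j * P m j) := by
    intro m j hm1 hm2 hj1 hj2
    rw [hQ m j ⟨hm1, hm2⟩ ⟨hj1, hj2⟩, hP m j ⟨hm1, hm2⟩ ⟨hj1, hj2⟩]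
    exact good_X_pderiv _ _
  have goodQ0 : ∀ j, 1 ≤ j → j ≤ N → Good (Q 0 j) := by
    intro j hj1 hj2
    rw [hQ0 j hj1 hj2]
    refine good_add (good_smul _ good_one) (good_sum _ _ fun m hm => ?_)
    simp only [Finset.mem_Icc] at hm
    exact goodQP m j hm.1 hm.2 hj1 hj2
  have goodPm0 : ∀ m, 1 ≤ m → m ≤ L - 1 → Good (P m 0) := by
    intro m hm1 hm2
    rw [hPm0 m hm1 hm2]
    refine good_add (good_smul _ good_one) (good_sum _ _ fun j hj => ?_)
    simp only [Finset.mem_Icc] at hj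
    exact goodQP m j hm1 hm2 hj.1 hj.2
  have goodQ00 : Good (Q 0 0) := by
    rw [hQ00]
    refine good_sub (good_smul _ good_one)
      (good_sum _ _ fun j hj => good_sum _ _ fun m hm => ?_)
    simp only [Finset.mem_Icc] at hj hm
    exact goodQP m j hm.1 hm.2 hj.1 hj.2
  have goodPn : ∀ n j, 1 ≤ n → n ≤ L - 1 → 1 ≤ j → j ≤ N → Good (P n j) := by
    intro n j hn1 hn2 hj1 hj2
    rw [hP n j ⟨hn1, hn2⟩ ⟨hj1, hj2⟩]
    exact good_pderiv _
  have goodP0 : ∀ j, j ≤ N → Good (P 0 j) := by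
    intro j hj2
    rcases Nat.eq_zero_or_pos j with rfl | hj1
    · rw [hP00]; exact good_neg_one
    · rw [hP0 j hj1 hj2]; exact good_neg_one
  have goodPQ : ∀ n j j', 1 ≤ n → n ≤ L - 1 → 1 ≤ j → j ≤ N → 1 ≤ j' → j' ≤ N →
      Good (P n j * Q n j') := by
    intro n j j' hn1 hn2 hj1 hj2 hj1' hj2'
    rw [hP n j ⟨hn1, hn2⟩ ⟨hj1, hj2⟩, hQ n j' ⟨hn1, hn2⟩ ⟨hj1', hj2'⟩]
    exact good_pderiv_X _ _
  -- reindexing lemma for the Euler operator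
  have hreidx : (∑ i' ∈ Finset.Icc 1 N, ∑ m' ∈ Finset.Icc 1 (L - 1), Q m' i' * P m' i') f
      = ∑ v : Fin (L - 1) × Fin N, MvPolynomial.X v * MvPolynomial.pderiv v f := by
    simp only [LinearMap.sum_apply]
    rw [Finset.sum_comm]
    conv_rhs => rw [Fintype.sum_prod_type]
    rw [sum_Icc_one_eq_fin (L - 1) (fun m' => ∑ i' ∈ Finset.Icc 1 N, (Q m' i' * P m' i') f)]
    refine Finset.sum_congr rfl fun a _ => ?_
    rw [sum_Icc_one_eq_fin N (fun i' => (Q (a.val + 1) i' * P (a.val + 1) i') f)]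
    refine Finset.sum_congr rfl fun b _ => ?_
    have ha := a.isLt
    have hb := b.isLt
    rw [hQ (a.val + 1) (b.val + 1) ⟨by omega, by omega⟩ ⟨by omega, by omega⟩,
      hP (a.val + 1) (b.val + 1) ⟨by omega, by omega⟩ ⟨by omega, by omega⟩]
    rfl
  -- main reduction
  have hzi := hz0 i hi1 hiN
  suffices hS : (z i • H i) f ∈ Vd (Fin (L - 1) × Fin N) M by
    have key : H i f = (z i)⁻¹ • ((z i • H i) f) := by
      rw [LinearMap.smul_apply, smul_smul, inv_mul_cancel₀ hzi, one_smul]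
    rw [key]
    exact mem_Vd.mp (Submodule.smul_mem _ _ hS)
  rw [hH i hi1 hiN]
  simp only [LinearMap.add_apply]
  refine add_mem (add_mem (add_mem (add_mem ?_ ?_) ?_) ?_) ?_
  · -- term 1
    rw [LinearMap.sum_apply]
    refine Submodule.sum_mem _ fun n hn => ?_
    simp only [Finset.mem_range] at hn
    rw [LinearMap.smul_apply]
    refine Submodule.smul_mem _ _ ?_
    rcases Nat.eq_zero_or_pos n with rfl | hn1
    · exact good_mul (goodQ0 i hi1 hiN) (goodP0 i hiN) M f hf'
    · exact goodQP n i hn1 (by omega) hi1 hiN M f hf'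
  · -- term 2
    rw [LinearMap.sum_apply]
    refine Submodule.sum_mem _ fun j hj => ?_
    simp only [Finset.mem_range] at hj
    rw [LinearMap.sum_apply]
    refine Submodule.sum_mem _ fun n hn => ?_
    simp only [Finset.mem_range] at hn
    rw [LinearMap.sum_apply]
    refine Submodule.sum_mem _ fun m hm => ?_
    simp only [Finset.mem_range] at hm
    have hn1 : 1 ≤ n := by omega
    have hn2 : n ≤ L - 1 := by omega
    have hjN : j ≤ N := by omega
    have gCD : Good (Q n j * P n i) := by
      rcases Nat.eq_zero_or_pos j with rfl | hj1
      · rw [hQm0 n hn1 hn2]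
        exact good_mul good_neg_one (goodPn n i hn1 hn2 hi1 hiN)
      · rw [hQ n j ⟨hn1, hn2⟩ ⟨hj1, hjN⟩, hP n i ⟨hn1, hn2⟩ ⟨hi1, hiN⟩]
        exact good_X_pderiv _ _
    rcases Nat.eq_zero_or_pos m with rfl | hm1
    · rw [mul_assoc (Q 0 i * P 0 j)]
      exact good_mul (good_mul (goodQ0 i hi1 hiN) (goodP0 j hjN)) gCD M f hf'
    · have hm2 : m ≤ L - 1 := by omega
      have gT : Good (P m j * Q n j) := by
        rcases Nat.eq_zero_or_pos j with rfl | hj1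
        · rw [hQm0 n hn1 hn2]
          exact good_mul (goodPm0 m hm1 hm2) good_neg_one
        · rw [hP m j ⟨hm1, hm2⟩ ⟨hj1, hjN⟩, hQ n j ⟨hn1, hn2⟩ ⟨hj1, hjN⟩]
          exact good_pderiv_X _ _
      rw [hQ m i ⟨hm1, hm2⟩ ⟨hi1, hiN⟩, hP n i ⟨hn1, hn2⟩ ⟨hi1, hiN⟩]
      exact chainX gT _ _ hf'
  · -- term 3
    rw [LinearMap.smul_apply]
    refine Submodule.smul_mem _ _ ?_
    rw [LinearMap.sum_apply]
    refine Submodule.sum_mem _ fun m hm => ?_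
    simp only [Finset.mem_range] at hm
    rcases Nat.eq_zero_or_pos m with rfl | hm1
    · rw [LinearMap.sum_apply]
      refine Submodule.sum_mem _ fun n hn => ?_
      simp only [Finset.mem_range] at hn
      rcases Nat.eq_zero_or_pos n with rfl | hn1
      · have gB : Good (P 0 0) := goodP0 0 (by omega)
        have gD : Good (P 0 i) := goodP0 i hiN
        exact good_mul (good_mul (good_mul (goodQ0 i hi1 hiN) gB) goodQ00) gD M f hf'
      · have gC : Good (Q n 0) := by rw [hQm0 n hn1 (by omega)]; exact good_neg_one
        exact good_mul (good_mul (good_mul (goodQ0 i hi1 hiN) (goodP0 0 (by omega))) gC)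
          (goodPn n i hn1 (by omega) hi1 hiN) M f hf'
    · have hm2 : m ≤ L - 1 := by omega
      have hgroup : ∑ n ∈ Finset.range L, Q m i * P m 0 * Q n 0 * P n i
          = Q m i * P m 0 * ∑ n ∈ Finset.range L, Q n 0 * P n i := by
        rw [Finset.mul_sum]
        exact Finset.sum_congr rfl fun n _ => by rw [← mul_assoc]
      rw [hgroup]
      have hsplit := range_eq_insert_Icc (show 1 ≤ L by omega)
      have hRf : (∑ n ∈ Finset.range L, Q n 0 * P n i) f
          = ((∑ v : Fin (L - 1) × Fin N, MvPolynomial.X v * MvPolynomial.pderiv v f)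
              - (M : ℂ) • f)
            - ∑ n ∈ Finset.Icc 1 (L - 1), P n i f := by
        rw [LinearMap.sum_apply, hsplit, Finset.sum_insert (by simp)]
        have hterm0 : (Q 0 0 * P 0 i) f
            = (∑ v : Fin (L - 1) × Fin N, MvPolynomial.X v * MvPolynomial.pderiv v f)
              - (M : ℂ) • f := by
          have hQ00f : Q 0 0 f = (M : ℂ) • f
              - ∑ v : Fin (L - 1) × Fin N, MvPolynomial.X v * MvPolynomial.pderiv v f := by
            rw [hQ00, hM, LinearMap.sub_apply, LinearMap.smul_apply, Module.End.one_apply,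
              hreidx]
          rw [Module.End.mul_apply, hP0 i hi1 hiN, LinearMap.neg_apply, Module.End.one_apply,
            map_neg, hQ00f, neg_sub]
        have hterms : ∀ n ∈ Finset.Icc 1 (L - 1), (Q n 0 * P n i) f = -(P n i f) := by
          intro n hn
          simp only [Finset.mem_Icc] at hn
          rw [Module.End.mul_apply, hQm0 n hn.1 hn.2, LinearMap.neg_apply, Module.End.one_apply]
        rw [hterm0, Finset.sum_congr rfl hterms, Finset.sum_neg_distrib, ← sub_eq_add_neg]
      rw [hQ m i ⟨hm1, hm2⟩ ⟨hi1, hiN⟩]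
      show MvPolynomial.X _ * (P m 0 ((∑ n ∈ Finset.range L, Q n 0 * P n i) f))
          ∈ Vd (Fin (L - 1) × Fin N) M
      rw [hRf]
      cases M with
      | zero =>
        have h1 : ∀ v : Fin (L - 1) × Fin N, MvPolynomial.pderiv v f = 0 :=
          fun v => pderiv_eq_zero v hf'
        have h2 : ∀ n ∈ Finset.Icc 1 (L - 1), P n i f = 0 := by
          intro n hn
          simp only [Finset.mem_Icc] at hn
          rw [hP n i ⟨hn.1, hn.2⟩ ⟨hi1, hiN⟩]
          exact pderiv_eq_zero _ hf'
        rw [Finset.sum_congr rfl h2]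
        simp [h1]
      | succ M' =>
        have h1 : ((∑ v : Fin (L - 1) × Fin N, MvPolynomial.X v * MvPolynomial.pderiv v f)
              - ((M' + 1 : ℕ) : ℂ) • f)
            - ∑ n ∈ Finset.Icc 1 (L - 1), P n i f ∈ Vd (Fin (L - 1) × Fin N) M' := by
          refine sub_mem (euler_sub_mem hf') (Submodule.sum_mem _ fun n hn => ?_)
          simp only [Finset.mem_Icc] at hn
          rw [hP n i ⟨hn.1, hn.2⟩ ⟨hi1, hiN⟩]
          exact pderiv_mem_of_le _ hf'
        exact X_mul_mem _ (goodPm0 m hm1 hm2 M' _ h1)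
  · -- term 4
    rw [LinearMap.sum_apply]
    refine Submodule.sum_mem _ fun j hj => ?_
    have hjmem := Finset.mem_of_mem_erase hj
    simp only [Finset.mem_Icc] at hjmem
    obtain ⟨hj1, hj2⟩ := hjmem
    rw [LinearMap.smul_apply]
    refine Submodule.smul_mem _ _ ?_
    rw [LinearMap.sum_apply]
    refine Submodule.sum_mem _ fun m hm => ?_
    simp only [Finset.mem_range] at hm
    rw [LinearMap.sum_apply]
    refine Submodule.sum_mem _ fun n hn => ?_
    simp only [Finset.mem_range] at hn
    have gBC : Good (P n i * Q n j) := by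
      rcases Nat.eq_zero_or_pos n with rfl | hn1
      · exact good_mul (goodP0 i hiN) (goodQ0 j hj1 hj2)
      · exact goodPQ n i j hn1 (by omega) hi1 hiN hj1 hj2
    rcases Nat.eq_zero_or_pos m with rfl | hm1
    · rw [mul_assoc (Q 0 i) (P n i) (Q n j)]
      exact good_mul (good_mul (goodQ0 i hi1 hiN) gBC) (goodP0 j hj2) M f hf'
    · have hm2 : m ≤ L - 1 := by omega
      rw [hQ m i ⟨hm1, hm2⟩ ⟨hi1, hiN⟩, hP m j ⟨hm1, hm2⟩ ⟨hj1, hj2⟩]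
      exact chainX gBC _ _ hf'
  · -- term 5
    rw [LinearMap.smul_apply, Module.End.one_apply]
    exact Submodule.smul_mem _ _ hf'
end

section
/- For all 1 ≤ l < n ≤ L−1 and all n ≤ k ≤ L−2, the following identity of rational functions holds: Sym[Σ_{m=n}^{k} t_m^{(1)} (−(t_m^{(1)} − t_{m−1}^{(2)})^{−1} + 2(t_m^{(1)} − t_m^{(2)})^{−1} − (t_m^{(1)} − t_{m+1}^{(2)})^{−1}) · (t_{L−1}^{(1)})^{−1} f_n^{x}(t^{(1)}) · (t_{L−1}^{(2)})^{−1} f_l^{y}(t^{(2)})] = Sym[(t_k^{(1)} − t_{k+1}^{(2)})^{−1} (t_{k+1}^{(1)} − t_k^{(2)})^{−1} · t_{k+1}^{(1)} (t_{L−1}^{(1)})^{−1} f_n^{x}(t^{(1)}) · (t_{L−1}^{(2)})^{−1} f_{l,k+1}^{y}(t^{(2)})]. -/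
noncomputable section

open Finset

/-- `f₀(t^{(a)})`, with the convention `t₀^{(a)} = u 0 a` (hypothesised to be `1`). -/
def f0 (L : ℕ) (u : ℕ → ℕ → ℂ) (a : ℕ) : ℂ :=
  ∏ m ∈ Finset.Icc 1 (L - 1), (u (m - 1) a - u m a)⁻¹

/-- `f_n^v(t^{(a)})` for a parameter `v ∈ {x, y}`. -/
def fP (L : ℕ) (v : ℂ) (n : ℕ) (u : ℕ → ℕ → ℂ) (a : ℕ) : ℂ :=
  (1 - v * u (L - 1) a)⁻¹ *
    ∏ m ∈ (Finset.Icc 1 (L - 1)).erase n, (u (m - 1) a - u m a)⁻¹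

/-- `f_{l,k}^v(t^{(a)})`. -/
def fP2 (L : ℕ) (v : ℂ) (l k : ℕ) (u : ℕ → ℕ → ℂ) (a : ℕ) : ℂ :=
  (1 - v * u (L - 1) a)⁻¹ *
    ∏ m ∈ ((Finset.Icc 1 (L - 1)).erase l).erase k, (u (m - 1) a - u m a)⁻¹

/-- The family `t` with the variables `t m 1 ↔ t m 2` swapped for `m ∈ S`. -/
def swapOn (S : Finset ℕ) (t : ℕ → ℕ → ℂ) : ℕ → ℕ → ℂ :=
  fun m a => if m ∈ S then t m (3 - a) else t m a

/-- The symmetrisation over the group `(S₂)^{L-1}`: the sum of the values of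
`g` on all families obtained from `t` by swapping `t m 1 ↔ t m 2` for `m` in a
subset of `{1, …, L-1}`. -/
def symSum (L : ℕ) (t : ℕ → ℕ → ℂ) (g : (ℕ → ℕ → ℂ) → ℂ) : ℂ :=
  ∑ S ∈ (Finset.Icc 1 (L - 1)).powerset, g (swapOn S t)

/-- The factor `C(n)`. -/
def Cf (L n : ℕ) (u : ℕ → ℕ → ℂ) : ℂ :=
  (∑ m ∈ Finset.Icc n (L - 1),
      u m 1 * (-(u m 1 - u (m - 1) 2)⁻¹ + 2 * (u m 1 - u m 2)⁻¹))
  - (∑ m ∈ Finset.Icc n (L - 2), u m 1 * (u m 1 - u (m + 1) 2)⁻¹)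
  + (if n = 1 then u 1 1 * (u 1 1 - 1)⁻¹ else 0)

/-! ### Auxiliary lemmas -/

lemma flipinv (a b : ℂ) : (a - b)⁻¹ = -(b - a)⁻¹ := by
  rw [show a - b = -(b - a) by ring, inv_neg]

lemma cancel5 (z x1 x2 x3 x4 x5 R : ℂ) (h1 : x1 ≠ 0) (h2 : x2 ≠ 0) (h3 : x3 ≠ 0)
    (h4 : x4 ≠ 0) (h5 : x5 ≠ 0) :
    z * x1⁻¹ * (x2⁻¹ * (x3⁻¹ * (x4⁻¹ * x5⁻¹))) * (x1 * (x2 * (x3 * (x4 * (x5 * R)))))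
      = z * R := by
  have e : z * x1⁻¹ * (x2⁻¹ * (x3⁻¹ * (x4⁻¹ * x5⁻¹))) * (x1 * (x2 * (x3 * (x4 * (x5 * R)))))
      = z * ((x1⁻¹*x1) * ((x2⁻¹*x2) * ((x3⁻¹*x3) * ((x4⁻¹*x4) * ((x5⁻¹*x5) * R))))) := by
    ring
  rw [e, inv_mul_cancel₀ h1, inv_mul_cancel₀ h2, inv_mul_cancel₀ h3, inv_mul_cancel₀ h4,
    inv_mul_cancel₀ h5]
  ring

section generic
variable {z a b c d e f g h i : ℂ}

lemma gs1 (ha : a ≠ 0) (hb : b ≠ 0) (hc : c ≠ 0) (hd : d ≠ 0) (he : e ≠ 0)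
    (hf : f ≠ 0) (hg : g ≠ 0) (hh : h ≠ 0) (hi : i ≠ 0) :
    z * (-a⁻¹ + 2*c⁻¹ - d⁻¹) * (h⁻¹ * f⁻¹ * (-b⁻¹) * e⁻¹) *
      (h * (i * (a * (b * (c * (d * (e * (f * g)))))))) = -z * (2*a*d - a*c - c*d) * g * i := by
  have k1 : z * a⁻¹ * (h⁻¹ * (f⁻¹ * (b⁻¹ * e⁻¹))) *
      (h * (i * (a * (b * (c * (d * (e * (f * g)))))))) = z * (i * (c * (d * g))) := by
    rw [show (h * (i * (a * (b * (c * (d * (e * (f * g))))))))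
      = a * (h * (f * (b * (e * (i * (c * (d * g))))))) from by ring]
    exact cancel5 z a h f b e (i * (c * (d * g))) ha hh hf hb he
  have k2 : z * c⁻¹ * (h⁻¹ * (f⁻¹ * (b⁻¹ * e⁻¹))) *
      (h * (i * (a * (b * (c * (d * (e * (f * g)))))))) = z * (i * (a * (d * g))) := by
    rw [show (h * (i * (a * (b * (c * (d * (e * (f * g))))))))
      = c * (h * (f * (b * (e * (i * (a * (d * g))))))) from by ring]
    exact cancel5 z c h f b e (i * (a * (d * g))) hc hh hf hb he
  have k3 : z * d⁻¹ * (h⁻¹ * (f⁻¹ * (b⁻¹ * e⁻¹))) *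
      (h * (i * (a * (b * (c * (d * (e * (f * g)))))))) = z * (i * (a * (c * g))) := by
    rw [show (h * (i * (a * (b * (c * (d * (e * (f * g))))))))
      = d * (h * (f * (b * (e * (i * (a * (c * g))))))) from by ring]
    exact cancel5 z d h f b e (i * (a * (c * g))) hd hh hf hb he
  linear_combination k1 - 2 * k2 + k3

lemma gs2 (ha : a ≠ 0) (hb : b ≠ 0) (hc : c ≠ 0) (hd : d ≠ 0) (he : e ≠ 0)
    (hf : f ≠ 0) (hg : g ≠ 0) (hh : h ≠ 0) (hi : i ≠ 0) :
    z * (-b⁻¹ + 2*(-c⁻¹) - e⁻¹) * (i⁻¹ * g⁻¹ * (-a⁻¹) * d⁻¹) *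
      (h * (i * (a * (b * (c * (d * (e * (f * g)))))))) = z * (c*e + 2*b*e + b*c) * f * h := by
  have k1 : z * b⁻¹ * (i⁻¹ * (g⁻¹ * (a⁻¹ * d⁻¹))) *
      (h * (i * (a * (b * (c * (d * (e * (f * g)))))))) = z * (h * (c * (e * f))) := by
    rw [show (h * (i * (a * (b * (c * (d * (e * (f * g))))))))
      = b * (i * (g * (a * (d * (h * (c * (e * f))))))) from by ring]
    exact cancel5 z b i g a d (h * (c * (e * f))) hb hi hg ha hd
  have k2 : z * c⁻¹ * (i⁻¹ * (g⁻¹ * (a⁻¹ * d⁻¹))) *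
      (h * (i * (a * (b * (c * (d * (e * (f * g)))))))) = z * (h * (b * (e * f))) := by
    rw [show (h * (i * (a * (b * (c * (d * (e * (f * g))))))))
      = c * (i * (g * (a * (d * (h * (b * (e * f))))))) from by ring]
    exact cancel5 z c i g a d (h * (b * (e * f))) hc hi hg ha hd
  have k3 : z * e⁻¹ * (i⁻¹ * (g⁻¹ * (a⁻¹ * d⁻¹))) *
      (h * (i * (a * (b * (c * (d * (e * (f * g)))))))) = z * (h * (b * (c * f))) := by
    rw [show (h * (i * (a * (b * (c * (d * (e * (f * g))))))))
      = e * (i * (g * (a * (d * (h * (b * (c * f))))))) from by ring]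
    exact cancel5 z e i g a d (h * (b * (c * f))) he hi hg ha hd
  linear_combination k1 + 2 * k2 + k3

lemma gs3 (ha : a ≠ 0) (hb : b ≠ 0) (hc : c ≠ 0) (hd : d ≠ 0) (he : e ≠ 0)
    (hf : f ≠ 0) (hg : g ≠ 0) (hh : h ≠ 0) (hi : i ≠ 0) :
    i⁻¹ * a⁻¹ * z * (h⁻¹ * f⁻¹ * e⁻¹) *
      (h * (i * (a * (b * (c * (d * (e * (f * g)))))))) = z * b * c * d * g := by
  field_simp

lemma gs4 (ha : a ≠ 0) (hb : b ≠ 0) (hc : c ≠ 0) (hd : d ≠ 0) (he : e ≠ 0)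
    (hf : f ≠ 0) (hg : g ≠ 0) (hh : h ≠ 0) (hi : i ≠ 0) :
    h⁻¹ * b⁻¹ * z * (i⁻¹ * g⁻¹ * d⁻¹) *
      (h * (i * (a * (b * (c * (d * (e * (f * g)))))))) = z * a * c * e * f := by
  field_simp

lemma gs5 (ha : a ≠ 0) (hb : b ≠ 0) (hc : c ≠ 0) (hd : d ≠ 0) (he : e ≠ 0)
    (hf : f ≠ 0) (hg : g ≠ 0) (hh : h ≠ 0) (hi : i ≠ 0) :
    d⁻¹ * (-g⁻¹) * z * (h⁻¹ * f⁻¹ * (-b⁻¹)) *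
      (h * (i * (a * (b * (c * (d * (e * (f * g)))))))) = z * a * c * e * i := by
  field_simp

lemma gs6 (ha : a ≠ 0) (hb : b ≠ 0) (hc : c ≠ 0) (hd : d ≠ 0) (he : e ≠ 0)
    (hf : f ≠ 0) (hg : g ≠ 0) (hh : h ≠ 0) (hi : i ≠ 0) :
    e⁻¹ * (-f⁻¹) * z * (i⁻¹ * g⁻¹ * (-a⁻¹)) *
      (h * (i * (a * (b * (c * (d * (e * (f * g)))))))) = z * b * c * d * h := by
  field_simp

end generic

lemma cancel4 (z x1 x2 x3 x4 R : ℂ) (h1 : x1 ≠ 0) (h2 : x2 ≠ 0) (h3 : x3 ≠ 0)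
    (h4 : x4 ≠ 0) :
    z * x1⁻¹ * (x2⁻¹ * (x3⁻¹ * x4⁻¹)) * (x1 * (x2 * (x3 * (x4 * R)))) = z * R := by
  have e : z * x1⁻¹ * (x2⁻¹ * (x3⁻¹ * x4⁻¹)) * (x1 * (x2 * (x3 * (x4 * R))))
      = z * ((x1⁻¹*x1) * ((x2⁻¹*x2) * ((x3⁻¹*x3) * ((x4⁻¹*x4) * R)))) := by ring
  rw [e, inv_mul_cancel₀ h1, inv_mul_cancel₀ h2, inv_mul_cancel₀ h3, inv_mul_cancel₀ h4]
  ring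

section genericB
variable {z a b c d e f g : ℂ}

lemma gb1 (ha : a ≠ 0) (hb : b ≠ 0) (hc : c ≠ 0) (hd : d ≠ 0) (he : e ≠ 0)
    (hf : f ≠ 0) (hg : g ≠ 0) :
    z * (-a⁻¹ + 2*c⁻¹ - d⁻¹) * (f⁻¹ * (-b⁻¹) * e⁻¹) *
      (a * (b * (c * (d * (e * (f * g)))))) = -z * (2*a*d - a*c - c*d) * g := by
  have k1 : z * a⁻¹ * (f⁻¹ * (b⁻¹ * e⁻¹)) * (a * (b * (c * (d * (e * (f * g))))))
      = z * (c * (d * g)) := by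
    rw [show (a * (b * (c * (d * (e * (f * g))))))
      = a * (f * (b * (e * (c * (d * g))))) from by ring]
    exact cancel4 z a f b e (c * (d * g)) ha hf hb he
  have k2 : z * c⁻¹ * (f⁻¹ * (b⁻¹ * e⁻¹)) * (a * (b * (c * (d * (e * (f * g))))))
      = z * (a * (d * g)) := by
    rw [show (a * (b * (c * (d * (e * (f * g))))))
      = c * (f * (b * (e * (a * (d * g))))) from by ring]
    exact cancel4 z c f b e (a * (d * g)) hc hf hb he
  have k3 : z * d⁻¹ * (f⁻¹ * (b⁻¹ * e⁻¹)) * (a * (b * (c * (d * (e * (f * g))))))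
      = z * (a * (c * g)) := by
    rw [show (a * (b * (c * (d * (e * (f * g))))))
      = d * (f * (b * (e * (a * (c * g))))) from by ring]
    exact cancel4 z d f b e (a * (c * g)) hd hf hb he
  linear_combination k1 - 2 * k2 + k3

lemma gb2 (ha : a ≠ 0) (hb : b ≠ 0) (hc : c ≠ 0) (hd : d ≠ 0) (he : e ≠ 0)
    (hf : f ≠ 0) (hg : g ≠ 0) :
    z * (-b⁻¹ + 2*(-c⁻¹) - e⁻¹) * (g⁻¹ * (-a⁻¹) * d⁻¹) *
      (a * (b * (c * (d * (e * (f * g)))))) = z * (c*e + 2*b*e + b*c) * f := by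
  have k1 : z * b⁻¹ * (g⁻¹ * (a⁻¹ * d⁻¹)) * (a * (b * (c * (d * (e * (f * g))))))
      = z * (c * (e * f)) := by
    rw [show (a * (b * (c * (d * (e * (f * g))))))
      = b * (g * (a * (d * (c * (e * f))))) from by ring]
    exact cancel4 z b g a d (c * (e * f)) hb hg ha hd
  have k2 : z * c⁻¹ * (g⁻¹ * (a⁻¹ * d⁻¹)) * (a * (b * (c * (d * (e * (f * g))))))
      = z * (b * (e * f)) := by
    rw [show (a * (b * (c * (d * (e * (f * g))))))
      = c * (g * (a * (d * (b * (e * f))))) from by ring]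
    exact cancel4 z c g a d (b * (e * f)) hc hg ha hd
  have k3 : z * e⁻¹ * (g⁻¹ * (a⁻¹ * d⁻¹)) * (a * (b * (c * (d * (e * (f * g))))))
      = z * (b * (c * f)) := by
    rw [show (a * (b * (c * (d * (e * (f * g))))))
      = e * (g * (a * (d * (b * (c * f))))) from by ring]
    exact cancel4 z e g a d (b * (c * f)) he hg ha hd
  linear_combination k1 + 2 * k2 + k3

lemma gb3 (ha : a ≠ 0) (hb : b ≠ 0) (hc : c ≠ 0) (hd : d ≠ 0) (he : e ≠ 0)
    (hf : f ≠ 0) (hg : g ≠ 0) :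
    d⁻¹ * (-g⁻¹) * z * (f⁻¹ * (-b⁻¹)) *
      (a * (b * (c * (d * (e * (f * g)))))) = z * (a * (c * e)) := by
  have k : z * d⁻¹ * (g⁻¹ * (f⁻¹ * b⁻¹)) * (a * (b * (c * (d * (e * (f * g))))))
      = z * (a * (c * e)) := by
    rw [show (a * (b * (c * (d * (e * (f * g))))))
      = d * (g * (f * (b * (a * (c * e))))) from by ring]
    exact cancel4 z d g f b (a * (c * e)) hd hg hf hb
  linear_combination k

lemma gb4 (ha : a ≠ 0) (hb : b ≠ 0) (hc : c ≠ 0) (hd : d ≠ 0) (he : e ≠ 0)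
    (hf : f ≠ 0) (hg : g ≠ 0) :
    e⁻¹ * (-f⁻¹) * z * (g⁻¹ * (-a⁻¹)) *
      (a * (b * (c * (d * (e * (f * g)))))) = z * (b * (c * d)) := by
  have k : z * e⁻¹ * (f⁻¹ * (g⁻¹ * a⁻¹)) * (a * (b * (c * (d * (e * (f * g))))))
      = z * (b * (c * d)) := by
    rw [show (a * (b * (c * (d * (e * (f * g))))))
      = e * (f * (g * (a * (b * (c * d))))) from by ring]
    exact cancel4 z e f g a (b * (c * d)) he hf hg ha
  linear_combination k

end genericB

set_option maxHeartbeats 1000000 in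
lemma core_base (q s u v w : ℂ)
    (hsq : s - q ≠ 0) (huq : u - q ≠ 0)
    (hsu : s - u ≠ 0)
    (hsw : s - w ≠ 0) (huw : u - w ≠ 0)
    (hsv : s - v ≠ 0) (huv : u - v ≠ 0) :
    s * (-(s-q)⁻¹ + 2*(s-u)⁻¹ - (s-w)⁻¹) * ((s-v)⁻¹ * (-(u-q)⁻¹) * (u-w)⁻¹)
      + u * (-(u-q)⁻¹ + 2*(-(s-u)⁻¹) - (u-w)⁻¹) * ((u-v)⁻¹ * (-(s-q)⁻¹) * (s-w)⁻¹)
    = (s-w)⁻¹ * (-(u-v)⁻¹) * v * ((s-v)⁻¹ * (-(u-q)⁻¹))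
      + (u-w)⁻¹ * (-(s-v)⁻¹) * v * ((u-v)⁻¹ * (-(s-q)⁻¹)) := by
  have hD : (s-q) * ((u-q) * ((s-u) * ((s-w) * ((u-w) * ((s-v) * (u-v)))))) ≠ 0 :=
    mul_ne_zero hsq (mul_ne_zero huq (mul_ne_zero hsu (mul_ne_zero hsw
      (mul_ne_zero huw (mul_ne_zero hsv huv)))))
  refine mul_right_cancel₀ hD ?_
  rw [add_mul, add_mul,
    gb1 hsq huq hsu hsw huw hsv huv,
    gb2 hsq huq hsu hsw huw hsv huv,
    gb3 hsq huq hsu hsw huw hsv huv,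
    gb4 hsq huq hsu hsw huw hsv huv]
  ring

set_option maxHeartbeats 1000000 in
lemma core_step (p q s u v w : ℂ)
    (hps : p - s ≠ 0) (hpu : p - u ≠ 0)
    (hsq : s - q ≠ 0) (huq : u - q ≠ 0)
    (hsu : s - u ≠ 0)
    (hsw : s - w ≠ 0) (huw : u - w ≠ 0)
    (hsv : s - v ≠ 0) (huv : u - v ≠ 0) :
    s * (-(s-q)⁻¹ + 2*(s-u)⁻¹ - (s-w)⁻¹) * ((p-s)⁻¹ * (s-v)⁻¹ * (-(u-q)⁻¹) * (u-w)⁻¹)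
      + u * (-(u-q)⁻¹ + 2*(-(s-u)⁻¹) - (u-w)⁻¹) * ((p-u)⁻¹ * (u-v)⁻¹ * (-(s-q)⁻¹) * (s-w)⁻¹)
      + (p-u)⁻¹ * (s-q)⁻¹ * s * ((p-s)⁻¹ * (s-v)⁻¹ * (u-w)⁻¹)
      + (p-s)⁻¹ * (u-q)⁻¹ * u * ((p-u)⁻¹ * (u-v)⁻¹ * (s-w)⁻¹)
    = (s-w)⁻¹ * (-(u-v)⁻¹) * v * ((p-s)⁻¹ * (s-v)⁻¹ * (-(u-q)⁻¹))
      + (u-w)⁻¹ * (-(s-v)⁻¹) * v * ((p-u)⁻¹ * (u-v)⁻¹ * (-(s-q)⁻¹)) := by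
  have hD : (p-s) * ((p-u) * ((s-q) * ((u-q) * ((s-u) * ((s-w) * ((u-w) * ((s-v) * (u-v)))))))) ≠ 0 :=
    mul_ne_zero hps (mul_ne_zero hpu (mul_ne_zero hsq (mul_ne_zero huq (mul_ne_zero hsu
      (mul_ne_zero hsw (mul_ne_zero huw (mul_ne_zero hsv huv)))))))
  refine mul_right_cancel₀ hD ?_
  rw [add_mul, add_mul, add_mul, add_mul,
    gs1 hsq huq hsu hsw huw hsv huv hps hpu,
    gs2 hsq huq hsu hsw huw hsv huv hps hpu,
    gs3 hsq huq hsu hsw huw hsv huv hps hpu,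
    gs4 hsq huq hsu hsw huw hsv huv hps hpu,
    gs5 hsq huq hsu hsw huw hsv huv hps hpu,
    gs6 hsq huq hsu hsw huw hsv huv hps hpu]
  ring

/-- Swap the two colours at a single index `c`. -/
def swapC (c : ℕ) (v : ℕ → ℕ → ℂ) : ℕ → ℕ → ℂ :=
  fun m a => if m = c then v m (3 - a) else v m a

lemma swapC_ne {c m : ℕ} (v : ℕ → ℕ → ℂ) (a : ℕ) (h : m ≠ c) : swapC c v m a = v m a :=
  if_neg h

lemma swapC_one (c : ℕ) (v : ℕ → ℕ → ℂ) : swapC c v c 1 = v c 2 := by simp [swapC]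

lemma swapC_two (c : ℕ) (v : ℕ → ℕ → ℂ) : swapC c v c 2 = v c 1 := by simp [swapC]

lemma swapOn_insert {c : ℕ} {S : Finset ℕ} (hc : c ∉ S) (t : ℕ → ℕ → ℂ) :
    swapOn (insert c S) t = swapC c (swapOn S t) := by
  funext m a
  by_cases hm : m = c
  · subst hm; simp [swapOn, swapC, hc]
  · simp [swapOn, swapC, hm]

lemma symSum_add (L : ℕ) (t : ℕ → ℕ → ℂ) (f g : (ℕ → ℕ → ℂ) → ℂ) :
    symSum L t (fun u => f u + g u) = symSum L t f + symSum L t g :=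
  Finset.sum_add_distrib

lemma symSum_pair (L c : ℕ) (t : ℕ → ℕ → ℂ) (g g' : (ℕ → ℕ → ℂ) → ℂ)
    (hc : c ∈ Finset.Icc 1 (L - 1))
    (h : ∀ S ∈ ((Finset.Icc 1 (L - 1)).erase c).powerset,
      g (swapOn S t) + g (swapC c (swapOn S t))
        = g' (swapOn S t) + g' (swapC c (swapOn S t))) :
    symSum L t g = symSum L t g' := by
  unfold symSum
  have hic : c ∉ (Finset.Icc 1 (L - 1)).erase c := Finset.notMem_erase c _
  rw [← Finset.insert_erase hc, Finset.sum_powerset_insert hic,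
    Finset.sum_powerset_insert hic, ← Finset.sum_add_distrib, ← Finset.sum_add_distrib]
  refine Finset.sum_congr rfl fun S hS => ?_
  have hcS : c ∉ S := fun h' => hic (Finset.mem_powerset.mp hS h')
  rw [swapOn_insert hcS t]
  exact h S hS

lemma ext1 {E : Finset ℕ} {c : ℕ} (hc : c ∈ E) (u : ℕ → ℕ → ℂ) (a : ℕ) :
    (∏ m ∈ E, (u (m - 1) a - u m a)⁻¹)
      = (u (c - 1) a - u c a)⁻¹ * ∏ m ∈ E.erase c, (u (m - 1) a - u m a)⁻¹ :=
  (Finset.mul_prod_erase E (fun m => (u (m - 1) a - u m a)⁻¹) hc).symm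

lemma prod_eqv (E : Finset ℕ) (a c : ℕ) (v v' : ℕ → ℕ → ℂ)
    (h'o : ∀ m a, m ≠ c → v' m a = v m a)
    (hE : ∀ m ∈ E, 1 ≤ m ∧ m ≠ c ∧ m ≠ c + 1) :
    ∏ m ∈ E, (v' (m - 1) a - v' m a)⁻¹ = ∏ m ∈ E, (v (m - 1) a - v m a)⁻¹ :=
  Finset.prod_congr rfl fun m hm => by
    obtain ⟨h1, h2, h3⟩ := hE m hm
    rw [h'o _ _ h2, h'o _ _ (by omega)]

lemma swapOn_val (S : Finset ℕ) (t : ℕ → ℕ → ℂ) (m a : ℕ) (ha : a = 1 ∨ a = 2) :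
    swapOn S t m a = t m 1 ∨ swapOn S t m a = t m 2 := by
  rcases ha with rfl | rfl <;> by_cases h : m ∈ S <;> simp [swapOn, h]

lemma swapOn_adj {L : ℕ} {t : ℕ → ℕ → ℂ}
    (hadj : ∀ m, 1 ≤ m → m ≤ L - 1 → ∀ a b, (a = 1 ∨ a = 2) → (b = 1 ∨ b = 2) →
      t (m - 1) a ≠ t m b)
    (S : Finset ℕ) (m : ℕ) (h1 : 1 ≤ m) (h2 : m ≤ L - 1) (a b : ℕ)
    (ha : a = 1 ∨ a = 2) (hb : b = 1 ∨ b = 2) :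
    swapOn S t (m - 1) a ≠ swapOn S t m b := by
  rcases swapOn_val S t (m - 1) a ha with h | h <;>
    rcases swapOn_val S t m b hb with h' | h' <;> rw [h, h']
  · exact hadj m h1 h2 1 1 (Or.inl rfl) (Or.inl rfl)
  · exact hadj m h1 h2 1 2 (Or.inl rfl) (Or.inr rfl)
  · exact hadj m h1 h2 2 1 (Or.inr rfl) (Or.inl rfl)
  · exact hadj m h1 h2 2 2 (Or.inr rfl) (Or.inr rfl)

lemma swapOn_ver {L : ℕ} {t : ℕ → ℕ → ℂ}
    (hver : ∀ m, 1 ≤ m → m ≤ L - 1 → t m 1 ≠ t m 2)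
    (S : Finset ℕ) (m : ℕ) (h1 : 1 ≤ m) (h2 : m ≤ L - 1) :
    swapOn S t m 1 ≠ swapOn S t m 2 := by
  by_cases h : m ∈ S
  · simpa [swapOn, h] using (hver m h1 h2).symm
  · simpa [swapOn, h] using hver m h1 h2

set_option maxHeartbeats 1000000 in
/-- Base case pairing identity. -/
lemma pairB (L : ℕ) (x y : ℂ) (l n : ℕ) (v v' : ℕ → ℕ → ℂ)
    (hl : 1 ≤ l) (hln : l < n) (hnL : n + 1 ≤ L - 1)
    (h'1 : v' n 1 = v n 2) (h'2 : v' n 2 = v n 1)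
    (h'o : ∀ m a, m ≠ n → v' m a = v m a)
    (hqs : v (n - 1) 2 ≠ v n 1) (hqu : v (n - 1) 2 ≠ v n 2)
    (hsv : v n 1 ≠ v (n + 1) 1) (hsw : v n 1 ≠ v (n + 1) 2)
    (huv : v n 2 ≠ v (n + 1) 1) (huw : v n 2 ≠ v (n + 1) 2)
    (hsu : v n 1 ≠ v n 2) :
    v n 1 * (-(v n 1 - v (n - 1) 2)⁻¹ + 2 * (v n 1 - v n 2)⁻¹ - (v n 1 - v (n + 1) 2)⁻¹) *
        ((v (L - 1) 1)⁻¹ * fP L x n v 1) * ((v (L - 1) 2)⁻¹ * fP L y l v 2)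
      + v' n 1 * (-(v' n 1 - v' (n - 1) 2)⁻¹ + 2 * (v' n 1 - v' n 2)⁻¹
            - (v' n 1 - v' (n + 1) 2)⁻¹) *
        ((v' (L - 1) 1)⁻¹ * fP L x n v' 1) * ((v' (L - 1) 2)⁻¹ * fP L y l v' 2)
    = (v n 1 - v (n + 1) 2)⁻¹ * (v (n + 1) 1 - v n 2)⁻¹ *
        (v (n + 1) 1 * (v (L - 1) 1)⁻¹ * fP L x n v 1) *
        ((v (L - 1) 2)⁻¹ * fP2 L y l (n + 1) v 2)
      + (v' n 1 - v' (n + 1) 2)⁻¹ * (v' (n + 1) 1 - v' n 2)⁻¹ *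
        (v' (n + 1) 1 * (v' (L - 1) 1)⁻¹ * fP L x n v' 1) *
        ((v' (L - 1) 2)⁻¹ * fP2 L y l (n + 1) v' 2) := by
  have hn1 : 1 ≤ n := by omega
  have mA : n + 1 ∈ (Finset.Icc 1 (L - 1)).erase n := by
    simp only [Finset.mem_erase, Finset.mem_Icc]; omega
  have mB1 : n ∈ (Finset.Icc 1 (L - 1)).erase l := by
    simp only [Finset.mem_erase, Finset.mem_Icc]; omega
  have mB2 : n + 1 ∈ ((Finset.Icc 1 (L - 1)).erase l).erase n := by
    simp only [Finset.mem_erase, Finset.mem_Icc]; omega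
  have mC : n ∈ ((Finset.Icc 1 (L - 1)).erase l).erase (n + 1) := by
    simp only [Finset.mem_erase, Finset.mem_Icc]; omega
  have hEA : ∀ m ∈ ((Finset.Icc 1 (L - 1)).erase n).erase (n + 1),
      1 ≤ m ∧ m ≠ n ∧ m ≠ n + 1 := by
    intro m hm; simp only [Finset.mem_erase, Finset.mem_Icc] at hm; omega
  have hEB : ∀ m ∈ (((Finset.Icc 1 (L - 1)).erase l).erase n).erase (n + 1),
      1 ≤ m ∧ m ≠ n ∧ m ≠ n + 1 := by
    intro m hm; simp only [Finset.mem_erase, Finset.mem_Icc] at hm; omega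
  have e1 : ∀ a, v' (n - 1) a = v (n - 1) a := fun a => h'o _ a (by omega)
  have e2 : ∀ a, v' (n + 1) a = v (n + 1) a := fun a => h'o _ a (by omega)
  have e3 : ∀ a, v' (L - 1) a = v (L - 1) a := fun a => h'o _ a (by omega)
  simp only [fP, fP2]
  rw [ext1 mA v 1, ext1 mA v' 1, ext1 mB1 v 2, ext1 mB2 v 2, ext1 mB1 v' 2, ext1 mB2 v' 2,
    ext1 mC v 2, ext1 mC v' 2,
    show (((Finset.Icc 1 (L - 1)).erase l).erase (n + 1)).erase n
      = (((Finset.Icc 1 (L - 1)).erase l).erase n).erase (n + 1) from Finset.erase_right_comm]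
  simp only [show n + 1 - 1 = n from rfl]
  rw [prod_eqv _ 1 n v v' h'o hEA, prod_eqv _ 2 n v v' h'o hEB]
  simp only [h'1, h'2, e1, e2, e3]
  rw [flipinv (v (n - 1) 2) (v n 2), flipinv (v (n - 1) 2) (v n 1), flipinv (v n 2) (v n 1),
    flipinv (v (n + 1) 1) (v n 2), flipinv (v (n + 1) 1) (v n 1)]
  linear_combination ((v (L - 1) 1)⁻¹ * (1 - x * v (L - 1) 1)⁻¹ *
      (∏ m ∈ ((Finset.Icc 1 (L - 1)).erase n).erase (n + 1), (v (m - 1) 1 - v m 1)⁻¹) *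
      ((v (L - 1) 2)⁻¹ * (1 - y * v (L - 1) 2)⁻¹ *
      (∏ m ∈ (((Finset.Icc 1 (L - 1)).erase l).erase n).erase (n + 1),
        (v (m - 1) 2 - v m 2)⁻¹))) *
    core_base (v (n - 1) 2) (v n 1) (v n 2) (v (n + 1) 1) (v (n + 1) 2)
      (sub_ne_zero_of_ne hqs.symm) (sub_ne_zero_of_ne hqu.symm) (sub_ne_zero_of_ne hsu)
      (sub_ne_zero_of_ne hsw) (sub_ne_zero_of_ne huw) (sub_ne_zero_of_ne hsv)
      (sub_ne_zero_of_ne huv)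

set_option maxHeartbeats 1000000 in
/-- Inductive step pairing identity. -/
lemma pair_step (L : ℕ) (x y : ℂ) (l n k : ℕ) (v v' : ℕ → ℕ → ℂ)
    (hl : 1 ≤ l) (hln : l < n) (hnk : n ≤ k) (hkL : k + 2 ≤ L - 1)
    (h'1 : v' (k + 1) 1 = v (k + 1) 2) (h'2 : v' (k + 1) 2 = v (k + 1) 1)
    (h'o : ∀ m a, m ≠ k + 1 → v' m a = v m a)
    (hps : v k 1 ≠ v (k + 1) 1) (hpu : v k 1 ≠ v (k + 1) 2)
    (hqs : v k 2 ≠ v (k + 1) 1) (hqu : v k 2 ≠ v (k + 1) 2)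
    (hsv : v (k + 1) 1 ≠ v (k + 2) 1) (hsw : v (k + 1) 1 ≠ v (k + 2) 2)
    (huv : v (k + 1) 2 ≠ v (k + 2) 1) (huw : v (k + 1) 2 ≠ v (k + 2) 2)
    (hsu : v (k + 1) 1 ≠ v (k + 1) 2) :
    (v (k + 1) 1 * (-(v (k + 1) 1 - v k 2)⁻¹ + 2 * (v (k + 1) 1 - v (k + 1) 2)⁻¹
          - (v (k + 1) 1 - v (k + 2) 2)⁻¹) *
        ((v (L - 1) 1)⁻¹ * fP L x n v 1) * ((v (L - 1) 2)⁻¹ * fP L y l v 2)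
      + (v k 1 - v (k + 1) 2)⁻¹ * (v (k + 1) 1 - v k 2)⁻¹ *
        (v (k + 1) 1 * (v (L - 1) 1)⁻¹ * fP L x n v 1) *
        ((v (L - 1) 2)⁻¹ * fP2 L y l (k + 1) v 2))
      + (v' (k + 1) 1 * (-(v' (k + 1) 1 - v' k 2)⁻¹ + 2 * (v' (k + 1) 1 - v' (k + 1) 2)⁻¹
          - (v' (k + 1) 1 - v' (k + 2) 2)⁻¹) *
        ((v' (L - 1) 1)⁻¹ * fP L x n v' 1) * ((v' (L - 1) 2)⁻¹ * fP L y l v' 2)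
      + (v' k 1 - v' (k + 1) 2)⁻¹ * (v' (k + 1) 1 - v' k 2)⁻¹ *
        (v' (k + 1) 1 * (v' (L - 1) 1)⁻¹ * fP L x n v' 1) *
        ((v' (L - 1) 2)⁻¹ * fP2 L y l (k + 1) v' 2))
    = (v (k + 1) 1 - v (k + 2) 2)⁻¹ * (v (k + 2) 1 - v (k + 1) 2)⁻¹ *
        (v (k + 2) 1 * (v (L - 1) 1)⁻¹ * fP L x n v 1) *
        ((v (L - 1) 2)⁻¹ * fP2 L y l (k + 2) v 2)
      + (v' (k + 1) 1 - v' (k + 2) 2)⁻¹ * (v' (k + 2) 1 - v' (k + 1) 2)⁻¹ *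
        (v' (k + 2) 1 * (v' (L - 1) 1)⁻¹ * fP L x n v' 1) *
        ((v' (L - 1) 2)⁻¹ * fP2 L y l (k + 2) v' 2) := by
  have mA1 : k + 1 ∈ (Finset.Icc 1 (L - 1)).erase n := by
    simp only [Finset.mem_erase, Finset.mem_Icc]; omega
  have mA2 : k + 2 ∈ ((Finset.Icc 1 (L - 1)).erase n).erase (k + 1) := by
    simp only [Finset.mem_erase, Finset.mem_Icc]; omega
  have mB1 : k + 1 ∈ (Finset.Icc 1 (L - 1)).erase l := by
    simp only [Finset.mem_erase, Finset.mem_Icc]; omega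
  have mB2 : k + 2 ∈ ((Finset.Icc 1 (L - 1)).erase l).erase (k + 1) := by
    simp only [Finset.mem_erase, Finset.mem_Icc]; omega
  have mD : k + 1 ∈ ((Finset.Icc 1 (L - 1)).erase l).erase (k + 2) := by
    simp only [Finset.mem_erase, Finset.mem_Icc]; omega
  have hEA : ∀ m ∈ (((Finset.Icc 1 (L - 1)).erase n).erase (k + 1)).erase (k + 2),
      1 ≤ m ∧ m ≠ k + 1 ∧ m ≠ k + 1 + 1 := by
    intro m hm; simp only [Finset.mem_erase, Finset.mem_Icc] at hm; omega
  have hEB : ∀ m ∈ (((Finset.Icc 1 (L - 1)).erase l).erase (k + 1)).erase (k + 2),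
      1 ≤ m ∧ m ≠ k + 1 ∧ m ≠ k + 1 + 1 := by
    intro m hm; simp only [Finset.mem_erase, Finset.mem_Icc] at hm; omega
  have e1 : ∀ a, v' k a = v k a := fun a => h'o _ a (by omega)
  have e2 : ∀ a, v' (k + 2) a = v (k + 2) a := fun a => h'o _ a (by omega)
  have e3 : ∀ a, v' (L - 1) a = v (L - 1) a := fun a => h'o _ a (by omega)
  simp only [fP, fP2]
  rw [ext1 mA1 v 1, ext1 mA2 v 1, ext1 mA1 v' 1, ext1 mA2 v' 1,
    ext1 mB1 v 2, ext1 mB2 v 2, ext1 mB1 v' 2, ext1 mB2 v' 2,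
    ext1 mD v 2, ext1 mD v' 2,
    show (((Finset.Icc 1 (L - 1)).erase l).erase (k + 2)).erase (k + 1)
      = (((Finset.Icc 1 (L - 1)).erase l).erase (k + 1)).erase (k + 2) from
      Finset.erase_right_comm]
  simp only [show k + 1 - 1 = k from rfl, show k + 2 - 1 = k + 1 from rfl]
  rw [prod_eqv _ 1 (k + 1) v v' h'o hEA, prod_eqv _ 2 (k + 1) v v' h'o hEB]
  simp only [h'1, h'2, e1, e2, e3]
  rw [flipinv (v k 2) (v (k + 1) 2), flipinv (v k 2) (v (k + 1) 1),
    flipinv (v (k + 1) 2) (v (k + 1) 1),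
    flipinv (v (k + 2) 1) (v (k + 1) 2), flipinv (v (k + 2) 1) (v (k + 1) 1)]
  linear_combination ((v (L - 1) 1)⁻¹ * (1 - x * v (L - 1) 1)⁻¹ *
      (∏ m ∈ (((Finset.Icc 1 (L - 1)).erase n).erase (k + 1)).erase (k + 2),
        (v (m - 1) 1 - v m 1)⁻¹) *
      ((v (L - 1) 2)⁻¹ * (1 - y * v (L - 1) 2)⁻¹ *
      (∏ m ∈ (((Finset.Icc 1 (L - 1)).erase l).erase (k + 1)).erase (k + 2),
        (v (m - 1) 2 - v m 2)⁻¹))) *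
    core_step (v k 1) (v k 2) (v (k + 1) 1) (v (k + 1) 2) (v (k + 2) 1) (v (k + 2) 2)
      (sub_ne_zero_of_ne hps) (sub_ne_zero_of_ne hpu)
      (sub_ne_zero_of_ne hqs.symm) (sub_ne_zero_of_ne hqu.symm) (sub_ne_zero_of_ne hsu)
      (sub_ne_zero_of_ne hsw) (sub_ne_zero_of_ne huw) (sub_ne_zero_of_ne hsv)
      (sub_ne_zero_of_ne huv)

theorem stmt10 (L : ℕ) (hL : 2 ≤ L) (t : ℕ → ℕ → ℂ) (x y : ℂ)
    (ht01 : t 0 1 = 1) (ht02 : t 0 2 = 1)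
    (hadj : ∀ m, 1 ≤ m → m ≤ L - 1 → ∀ a b, (a = 1 ∨ a = 2) → (b = 1 ∨ b = 2) →
      t (m - 1) a ≠ t m b)
    (hver : ∀ m, 1 ≤ m → m ≤ L - 1 → t m 1 ≠ t m 2)
    (hxt : ∀ a, (a = 1 ∨ a = 2) → 1 - x * t (L - 1) a ≠ 0)
    (hyt : ∀ a, (a = 1 ∨ a = 2) → 1 - y * t (L - 1) a ≠ 0)
    (htL1 : t (L - 1) 1 ≠ 0) (htL2 : t (L - 1) 2 ≠ 0)
    (hxy : x ≠ y) (hx1 : x ≠ 1) :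
    -- Statement 10: the inductive claim (3.2 in the proof of Lemma `l < n`).
    ∀ l n k, 1 ≤ l → l < n → n ≤ L - 1 → n ≤ k → k ≤ L - 2 →
      symSum L t (fun u =>
          (∑ m ∈ Finset.Icc n k, u m 1 *
            (-(u m 1 - u (m - 1) 2)⁻¹ + 2 * (u m 1 - u m 2)⁻¹
              - (u m 1 - u (m + 1) 2)⁻¹)) *
          ((u (L - 1) 1)⁻¹ * fP L x n u 1) * ((u (L - 1) 2)⁻¹ * fP L y l u 2))
        = symSum L t (fun u =>
            (u k 1 - u (k + 1) 2)⁻¹ * (u (k + 1) 1 - u k 2)⁻¹ *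
            (u (k + 1) 1 * (u (L - 1) 1)⁻¹ * fP L x n u 1) *
            ((u (L - 1) 2)⁻¹ * fP2 L y l (k + 1) u 2)) := by
  intro l n k hl hln hnL hnk
  induction k, hnk using Nat.le_induction with
  | base =>
    intro hkL
    simp only [Finset.Icc_self, Finset.sum_singleton]
    refine symSum_pair L n t _ _ (Finset.mem_Icc.mpr ⟨by omega, by omega⟩) ?_
    intro S hS
    exact pairB L x y l n (swapOn S t) (swapC n (swapOn S t)) hl hln (by omega)
      (swapC_one n _) (swapC_two n _) (fun m a h => swapC_ne _ _ h)
      (swapOn_adj hadj S n (by omega) (by omega) 2 1 (Or.inr rfl) (Or.inl rfl))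
      (swapOn_adj hadj S n (by omega) (by omega) 2 2 (Or.inr rfl) (Or.inr rfl))
      (swapOn_adj hadj S (n + 1) (by omega) (by omega) 1 1 (Or.inl rfl) (Or.inl rfl))
      (swapOn_adj hadj S (n + 1) (by omega) (by omega) 1 2 (Or.inl rfl) (Or.inr rfl))
      (swapOn_adj hadj S (n + 1) (by omega) (by omega) 2 1 (Or.inr rfl) (Or.inl rfl))
      (swapOn_adj hadj S (n + 1) (by omega) (by omega) 2 2 (Or.inr rfl) (Or.inr rfl))
      (swapOn_ver hver S n (by omega) (by omega))
  | succ k hnk ih =>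
    intro hk1L
    have hkL : k ≤ L - 2 := by omega
    have heq := ih hkL
    simp only [show k + 1 + 1 = k + 2 from rfl]
    have hfun : ∀ u : ℕ → ℕ → ℂ,
        (∑ m ∈ Finset.Icc n (k + 1), u m 1 *
            (-(u m 1 - u (m - 1) 2)⁻¹ + 2 * (u m 1 - u m 2)⁻¹
              - (u m 1 - u (m + 1) 2)⁻¹)) *
          ((u (L - 1) 1)⁻¹ * fP L x n u 1) * ((u (L - 1) 2)⁻¹ * fP L y l u 2)
        = (u (k + 1) 1 * (-(u (k + 1) 1 - u k 2)⁻¹ + 2 * (u (k + 1) 1 - u (k + 1) 2)⁻¹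
              - (u (k + 1) 1 - u (k + 2) 2)⁻¹) *
            ((u (L - 1) 1)⁻¹ * fP L x n u 1) * ((u (L - 1) 2)⁻¹ * fP L y l u 2))
          + ((∑ m ∈ Finset.Icc n k, u m 1 *
              (-(u m 1 - u (m - 1) 2)⁻¹ + 2 * (u m 1 - u m 2)⁻¹
                - (u m 1 - u (m + 1) 2)⁻¹)) *
            ((u (L - 1) 1)⁻¹ * fP L x n u 1) * ((u (L - 1) 2)⁻¹ * fP L y l u 2)) := by
      intro u
      rw [← Finset.insert_Icc_right_eq_Icc_add_one (by omega : n ≤ k + 1),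
        Finset.sum_insert (by intro h; rw [Finset.mem_Icc] at h; omega)]
      simp only [show k + 1 - 1 = k from rfl, show k + 1 + 1 = k + 2 from rfl]
      ring
    calc symSum L t (fun u =>
          (∑ m ∈ Finset.Icc n (k + 1), u m 1 *
            (-(u m 1 - u (m - 1) 2)⁻¹ + 2 * (u m 1 - u m 2)⁻¹
              - (u m 1 - u (m + 1) 2)⁻¹)) *
          ((u (L - 1) 1)⁻¹ * fP L x n u 1) * ((u (L - 1) 2)⁻¹ * fP L y l u 2))
        = symSum L t (fun u =>
            (u (k + 1) 1 * (-(u (k + 1) 1 - u k 2)⁻¹ + 2 * (u (k + 1) 1 - u (k + 1) 2)⁻¹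
                - (u (k + 1) 1 - u (k + 2) 2)⁻¹) *
              ((u (L - 1) 1)⁻¹ * fP L x n u 1) * ((u (L - 1) 2)⁻¹ * fP L y l u 2))
            + ((∑ m ∈ Finset.Icc n k, u m 1 *
                (-(u m 1 - u (m - 1) 2)⁻¹ + 2 * (u m 1 - u m 2)⁻¹
                  - (u m 1 - u (m + 1) 2)⁻¹)) *
              ((u (L - 1) 1)⁻¹ * fP L x n u 1) * ((u (L - 1) 2)⁻¹ * fP L y l u 2))) := by
          unfold symSum
          exact Finset.sum_congr rfl fun S _ => hfun _
      _ = symSum L t (fun u =>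
            u (k + 1) 1 * (-(u (k + 1) 1 - u k 2)⁻¹ + 2 * (u (k + 1) 1 - u (k + 1) 2)⁻¹
                - (u (k + 1) 1 - u (k + 2) 2)⁻¹) *
              ((u (L - 1) 1)⁻¹ * fP L x n u 1) * ((u (L - 1) 2)⁻¹ * fP L y l u 2))
          + symSum L t (fun u =>
            (∑ m ∈ Finset.Icc n k, u m 1 *
                (-(u m 1 - u (m - 1) 2)⁻¹ + 2 * (u m 1 - u m 2)⁻¹
                  - (u m 1 - u (m + 1) 2)⁻¹)) *
              ((u (L - 1) 1)⁻¹ * fP L x n u 1) * ((u (L - 1) 2)⁻¹ * fP L y l u 2)) :=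
          symSum_add L t _ _
      _ = symSum L t (fun u =>
            u (k + 1) 1 * (-(u (k + 1) 1 - u k 2)⁻¹ + 2 * (u (k + 1) 1 - u (k + 1) 2)⁻¹
                - (u (k + 1) 1 - u (k + 2) 2)⁻¹) *
              ((u (L - 1) 1)⁻¹ * fP L x n u 1) * ((u (L - 1) 2)⁻¹ * fP L y l u 2))
          + symSum L t (fun u =>
            (u k 1 - u (k + 1) 2)⁻¹ * (u (k + 1) 1 - u k 2)⁻¹ *
            (u (k + 1) 1 * (u (L - 1) 1)⁻¹ * fP L x n u 1) *
            ((u (L - 1) 2)⁻¹ * fP2 L y l (k + 1) u 2)) := by rw [heq]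
      _ = symSum L t (fun u =>
            u (k + 1) 1 * (-(u (k + 1) 1 - u k 2)⁻¹ + 2 * (u (k + 1) 1 - u (k + 1) 2)⁻¹
                - (u (k + 1) 1 - u (k + 2) 2)⁻¹) *
              ((u (L - 1) 1)⁻¹ * fP L x n u 1) * ((u (L - 1) 2)⁻¹ * fP L y l u 2)
            + (u k 1 - u (k + 1) 2)⁻¹ * (u (k + 1) 1 - u k 2)⁻¹ *
            (u (k + 1) 1 * (u (L - 1) 1)⁻¹ * fP L x n u 1) *
            ((u (L - 1) 2)⁻¹ * fP2 L y l (k + 1) u 2)) := (symSum_add L t _ _).symm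
      _ = symSum L t (fun u =>
            (u (k + 1) 1 - u (k + 2) 2)⁻¹ * (u (k + 2) 1 - u (k + 1) 2)⁻¹ *
            (u (k + 2) 1 * (u (L - 1) 1)⁻¹ * fP L x n u 1) *
            ((u (L - 1) 2)⁻¹ * fP2 L y l (k + 2) u 2)) := by
          refine symSum_pair L (k + 1) t _ _ (Finset.mem_Icc.mpr ⟨by omega, by omega⟩) ?_
          intro S hS
          exact pair_step L x y l n k (swapOn S t) (swapC (k + 1) (swapOn S t))
            hl hln hnk (by omega)
            (swapC_one _ _) (swapC_two _ _) (fun m a h => swapC_ne _ _ h)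
            (swapOn_adj hadj S (k + 1) (by omega) (by omega) 1 1 (Or.inl rfl) (Or.inl rfl))
            (swapOn_adj hadj S (k + 1) (by omega) (by omega) 1 2 (Or.inl rfl) (Or.inr rfl))
            (swapOn_adj hadj S (k + 1) (by omega) (by omega) 2 1 (Or.inr rfl) (Or.inl rfl))
            (swapOn_adj hadj S (k + 1) (by omega) (by omega) 2 2 (Or.inr rfl) (Or.inr rfl))
            (swapOn_adj hadj S (k + 2) (by omega) (by omega) 1 1 (Or.inl rfl) (Or.inl rfl))
            (swapOn_adj hadj S (k + 2) (by omega) (by omega) 1 2 (Or.inl rfl) (Or.inr rfl))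
            (swapOn_adj hadj S (k + 2) (by omega) (by omega) 2 1 (Or.inr rfl) (Or.inl rfl))
            (swapOn_adj hadj S (k + 2) (by omega) (by omega) 2 2 (Or.inr rfl) (Or.inr rfl))
            (swapOn_ver hver S (k + 1) (by omega) (by omega))
end
end

section
/- For all 1 ≤ l ≤ n ≤ L−1, the following identity of rational functions holds: Sym[−(t_{L−1}^{(1)} − t_{L−1}^{(2)})^{−1} f_n^{y}(t^{(1)}) (t_{L−1}^{(1)})^{−1} f_l^{x}(t^{(2)}) + (t_{L−1}^{(1)} − t_{L−1}^{(2)})^{−1} f_n^{x}(t^{(1)}) (t_{L−1}^{(2)})^{−1} f_l^{y}(t^{(2)})] = Sym[(t_{L−1}^{(1)} t_{L−1}^{(2)})^{−1} f_n^{x}(t^{(1)}) f_l^{x}(t^{(2)}) · (1 − y (t_{L−1}^{(1)} + t_{L−1}^{(2)}) + x y t_{L−1}^{(1)} t_{L−1}^{(2)}) / ((1 − y t_{L−1}^{(1)})(1 − y t_{L−1}^{(2)}))]. -/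
noncomputable section

open Finset

lemma part17 (x y A B : ℂ) (hA : A ≠ 0) (hB : B ≠ 0)
    (hAB : A - B ≠ 0)
    (hxA : 1 - x*A ≠ 0) (hxB : 1 - x*B ≠ 0) (hyA : 1 - y*A ≠ 0) (hyB : 1 - y*B ≠ 0) :
    -((A - B)⁻¹ * (1 - y*A)⁻¹ * (A⁻¹ * (1 - x*B)⁻¹))
      + (A - B)⁻¹ * (1 - x*A)⁻¹ * (B⁻¹ * (1 - y*B)⁻¹)
    = (A*B)⁻¹ * (1 - x*A)⁻¹ * (1 - x*B)⁻¹ *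
        ((1 - y*(A+B) + x*y*(A*B)) / ((1 - y*A)*(1 - y*B))) := by
  have hp : (A - B) * ((1 - y*A) * (A * (1 - x*B))) ≠ 0 := by
    exact mul_ne_zero hAB (mul_ne_zero hyA (mul_ne_zero hA hxB))
  have hq : (A - B) * ((1 - x*A) * (B * (1 - y*B))) ≠ 0 := by
    exact mul_ne_zero hAB (mul_ne_zero hxA (mul_ne_zero hB hyB))
  have hr : (A*B) * ((1 - x*A) * ((1 - x*B) * ((1 - y*A) * (1 - y*B)))) ≠ 0 := by
    exact mul_ne_zero (mul_ne_zero hA hB) (mul_ne_zero hxA (mul_ne_zero hxB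
      (mul_ne_zero hyA hyB)))
  have t1 : (A - B)⁻¹ * (1 - y*A)⁻¹ * (A⁻¹ * (1 - x*B)⁻¹)
      = 1 / ((A - B) * ((1 - y*A) * (A * (1 - x*B)))) := by
    rw [one_div]; simp only [mul_inv]; ring
  have t2 : (A - B)⁻¹ * (1 - x*A)⁻¹ * (B⁻¹ * (1 - y*B)⁻¹)
      = 1 / ((A - B) * ((1 - x*A) * (B * (1 - y*B)))) := by
    rw [one_div]; simp only [mul_inv]; ring
  have t3 : (A*B)⁻¹ * (1 - x*A)⁻¹ * (1 - x*B)⁻¹ *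
        ((1 - y*(A+B) + x*y*(A*B)) / ((1 - y*A)*(1 - y*B)))
      = (1 - y*(A+B) + x*y*(A*B)) /
          ((A*B) * ((1 - x*A) * ((1 - x*B) * ((1 - y*A) * (1 - y*B))))) := by
    rw [div_eq_mul_inv, div_eq_mul_inv]; simp only [mul_inv]; ring
  rw [t1, t2, t3, neg_add_eq_sub, div_sub_div _ _ hq hp, div_eq_div_iff (mul_ne_zero hq hp) hr]
  ring

set_option maxHeartbeats 2000000 in
lemma key17 (x y A B P1 P1' P2 P2' : ℂ) (hA : A ≠ 0) (hB : B ≠ 0)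
    (hAB : A - B ≠ 0) (hBA : B - A ≠ 0)
    (hxA : 1 - x*A ≠ 0) (hxB : 1 - x*B ≠ 0) (hyA : 1 - y*A ≠ 0) (hyB : 1 - y*B ≠ 0) :
    (-((A - B)⁻¹ * ((1 - y*A)⁻¹ * P1) * (A⁻¹ * ((1 - x*B)⁻¹ * P2)))
      + (A - B)⁻¹ * ((1 - x*A)⁻¹ * P1) * (B⁻¹ * ((1 - y*B)⁻¹ * P2)))
    + (-((B - A)⁻¹ * ((1 - y*B)⁻¹ * P1') * (B⁻¹ * ((1 - x*A)⁻¹ * P2')))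
      + (B - A)⁻¹ * ((1 - x*B)⁻¹ * P1') * (A⁻¹ * ((1 - y*A)⁻¹ * P2')))
    = (A*B)⁻¹ * ((1 - x*A)⁻¹ * P1) * ((1 - x*B)⁻¹ * P2) *
        ((1 - y*(A+B) + x*y*(A*B)) / ((1 - y*A)*(1 - y*B)))
      + (B*A)⁻¹ * ((1 - x*B)⁻¹ * P1') * ((1 - x*A)⁻¹ * P2') *
        ((1 - y*(B+A) + x*y*(B*A)) / ((1 - y*B)*(1 - y*A))) := by
  have h1 := part17 x y A B hA hB hAB hxA hxB hyA hyB
  have h2 := part17 x y B A hB hA hBA hxB hxA hyB hyA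
  linear_combination (P1*P2) * h1 + (P1'*P2') * h2

theorem stmt17 (L : ℕ) (hL : 2 ≤ L) (t : ℕ → ℕ → ℂ) (x y : ℂ)
    (ht01 : t 0 1 = 1) (ht02 : t 0 2 = 1)
    (hadj : ∀ m, 1 ≤ m → m ≤ L - 1 → ∀ a b, (a = 1 ∨ a = 2) → (b = 1 ∨ b = 2) →
      t (m - 1) a ≠ t m b)
    (hver : ∀ m, 1 ≤ m → m ≤ L - 1 → t m 1 ≠ t m 2)
    (hxt : ∀ a, (a = 1 ∨ a = 2) → 1 - x * t (L - 1) a ≠ 0)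
    (hyt : ∀ a, (a = 1 ∨ a = 2) → 1 - y * t (L - 1) a ≠ 0)
    (htL1 : t (L - 1) 1 ≠ 0) (htL2 : t (L - 1) 2 ≠ 0)
    (hxy : x ≠ y) (hx1 : x ≠ 1) :
    -- Statement 17: the final symmetrisation identity used in Lemmas 4.1–4.3.
    ∀ l n, 1 ≤ l → l ≤ n → n ≤ L - 1 →
      symSum L t (fun u =>
          -((u (L - 1) 1 - u (L - 1) 2)⁻¹ * fP L y n u 1 *
            ((u (L - 1) 1)⁻¹ * fP L x l u 2))
          + (u (L - 1) 1 - u (L - 1) 2)⁻¹ * fP L x n u 1 *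
            ((u (L - 1) 2)⁻¹ * fP L y l u 2))
        = symSum L t (fun u =>
            (u (L - 1) 1 * u (L - 1) 2)⁻¹ * fP L x n u 1 * fP L x l u 2 *
              ((1 - y * (u (L - 1) 1 + u (L - 1) 2)
                  + x * y * (u (L - 1) 1 * u (L - 1) 2)) /
                ((1 - y * u (L - 1) 1) * (1 - y * u (L - 1) 2)))) := by
  intro l n hl hln hnL
  have h1L : 1 ≤ L - 1 := by omega
  have hAB : t (L-1) 1 - t (L-1) 2 ≠ 0 := sub_ne_zero.mpr (hver (L-1) h1L le_rfl)
  have hBA : t (L-1) 2 - t (L-1) 1 ≠ 0 := sub_ne_zero.mpr (Ne.symm (hver (L-1) h1L le_rfl))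
  have hxA := hxt 1 (Or.inl rfl)
  have hxB := hxt 2 (Or.inr rfl)
  have hyA := hyt 1 (Or.inl rfl)
  have hyB := hyt 2 (Or.inr rfl)
  have hIcc : Finset.Icc 1 (L-1) = insert (L-1) (Finset.Icc 1 (L-2)) := by
    ext m
    simp only [Finset.mem_Icc, Finset.mem_insert]
    omega
  have hnm : L - 1 ∉ Finset.Icc 1 (L-2) := by
    simp only [Finset.mem_Icc]
    omega
  simp only [symSum]
  rw [hIcc, Finset.sum_powerset_insert hnm, Finset.sum_powerset_insert hnm,
    ← Finset.sum_add_distrib, ← Finset.sum_add_distrib]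
  refine Finset.sum_congr rfl fun S hS => ?_
  have hLS : L - 1 ∉ S := fun h => hnm (Finset.mem_powerset.mp hS h)
  have e1 : swapOn S t (L-1) 1 = t (L-1) 1 := by simp [swapOn, hLS]
  have e2 : swapOn S t (L-1) 2 = t (L-1) 2 := by simp [swapOn, hLS]
  have e1' : swapOn (insert (L-1) S) t (L-1) 1 = t (L-1) 2 := by simp [swapOn]
  have e2' : swapOn (insert (L-1) S) t (L-1) 2 = t (L-1) 1 := by simp [swapOn]
  simp only [fP]
  rw [e1, e2, e1', e2']
  exact key17 x y (t (L-1) 1) (t (L-1) 2) _ _ _ _ htL1 htL2 hAB hBA hxA hxB hyA hyB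
end
end

section
/- For all 1 ≤ n ≤ L−1, the following identity of rational functions in ℂ(x, t_1, …, t_{L−1}) holds: (t_n / (t_n − t_{n−1})) · f_n^{x}(t) = (1/(x−1)) · (f_0(t) − Σ_{m=1}^{n} f_m^{x}(t) − x Σ_{m=n+1}^{L−1} f_m^{x}(t)). In particular (the telescoping identity used for n = 1): (t_1/(t_1 − 1)) f_1^{x}(t) = (1/(x−1)) (f_0(t) − f_1^{x}(t) − x Σ_{m=2}^{L−1} f_m^{x}(t)). -/
/-!
Every `f_n^x` is the common product `f₀` with its `n`-th factor removed, so
`f_n^x = (t_{n-1} - t_n) f₀ / (1 - x t_{L-1})`. The sums over `m ≤ n` and `m > n` then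
telescope to `(1 - t_n) f₀ / (1 - x t_{L-1})` and `(t_n - t_{L-1}) f₀ / (1 - x t_{L-1})`,
and both sides of the identity reduce to `-t_n f₀ / (1 - x t_{L-1})`.
-/

noncomputable section

/-- `f₀(t)` (with the convention that `t 0` plays the role of `t₀ = 1`). -/
def g0 (L : ℕ) (t : ℕ → ℂ) : ℂ :=
  ∏ m ∈ Finset.Icc 1 (L - 1), (t (m - 1) - t m)⁻¹

/-- `f_n^x(t)`. -/
def gP (L : ℕ) (x : ℂ) (n : ℕ) (t : ℕ → ℂ) : ℂ :=
  (1 - x * t (L - 1))⁻¹ *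
    ∏ m ∈ (Finset.Icc 1 (L - 1)).erase n, (t (m - 1) - t m)⁻¹

open Finset

theorem Finset.sum_Icc_succ_sub_pred {G : Type*} [AddCommGroup G] (t : ℕ → G) {a b : ℕ}
    (hab : a ≤ b) : ∑ m ∈ Icc (a + 1) b, (t (m - 1) - t m) = t a - t b := by
  rw [← Ico_add_one_right_eq_Icc, ← sum_Ico_add', ← neg_sub, ← sum_Ico_sub _ hab,
    ← sum_neg_distrib]
  simp

lemma gP_eq_mul_g0 {L n : ℕ} (x : ℂ) {t : ℕ → ℂ} (hn : n ∈ Icc 1 (L - 1))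
    (hne : t (n - 1) ≠ t n) :
    gP L x n t = (1 - x * t (L - 1))⁻¹ * ((t (n - 1) - t n) * g0 L t) := by
  rw [gP, g0, ← mul_prod_erase _ _ hn, mul_inv_cancel_left₀ (sub_ne_zero.mpr hne)]

lemma sum_gP_Icc {L a b : ℕ} (x : ℂ) {t : ℕ → ℂ}
    (hadj : ∀ m, 1 ≤ m → m ≤ L - 1 → t (m - 1) ≠ t m) (hab : a ≤ b) (hb : b ≤ L - 1) :
    ∑ m ∈ Icc (a + 1) b, gP L x m t = (1 - x * t (L - 1))⁻¹ * ((t a - t b) * g0 L t) := by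
  have hgP : ∀ m ∈ Icc (a + 1) b,
      gP L x m t = (1 - x * t (L - 1))⁻¹ * ((t (m - 1) - t m) * g0 L t) := by
    intro m hm
    rw [mem_Icc] at hm
    exact gP_eq_mul_g0 x (mem_Icc.mpr ⟨by omega, by omega⟩) (hadj m (by omega) (by omega))
  rw [sum_congr rfl hgP, ← mul_sum, ← sum_mul, sum_Icc_succ_sub_pred t hab]

lemma gP_telescoping {L n : ℕ} {t : ℕ → ℂ} {x : ℂ} (ht0 : t 0 = 1)
    (hadj : ∀ m, 1 ≤ m → m ≤ L - 1 → t (m - 1) ≠ t m)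
    (hxt : 1 - x * t (L - 1) ≠ 0) (hx1 : x ≠ 1) (hn1 : 1 ≤ n) (hnL : n ≤ L - 1) :
    t n / (t n - t (n - 1)) * gP L x n t
      = 1 / (x - 1) *
          (g0 L t - (∑ m ∈ Icc 1 n, gP L x m t)
            - x * ∑ m ∈ Icc (n + 1) (L - 1), gP L x m t) := by
  have hlow := sum_gP_Icc x hadj (Nat.zero_le n) hnL
  have hhigh := sum_gP_Icc x hadj hnL le_rfl
  rw [zero_add, ht0] at hlow
  have hne : t n - t (n - 1) ≠ 0 := sub_ne_zero.mpr (hadj n hn1 hnL).symm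
  have hx : x - 1 ≠ 0 := sub_ne_zero.mpr hx1
  rw [hlow, hhigh, gP_eq_mul_g0 x (mem_Icc.mpr ⟨hn1, hnL⟩) (hadj n hn1 hnL)]
  field_simp
  ring

theorem stmt18 (L : ℕ) (hL : 2 ≤ L) (t : ℕ → ℂ) (x : ℂ)
    (ht0 : t 0 = 1)
    (hadj : ∀ m, 1 ≤ m → m ≤ L - 1 → t (m - 1) ≠ t m)
    (hxt : 1 - x * t (L - 1) ≠ 0)
    (hx1 : x ≠ 1) :
    (∀ n, 1 ≤ n → n ≤ L - 1 →
      t n / (t n - t (n - 1)) * gP L x n t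
        = 1 / (x - 1) *
            (g0 L t - (∑ m ∈ Finset.Icc 1 n, gP L x m t)
              - x * ∑ m ∈ Finset.Icc (n + 1) (L - 1), gP L x m t))
    ∧
    (t 1 / (t 1 - 1) * gP L x 1 t
      = 1 / (x - 1) *
          (g0 L t - gP L x 1 t - x * ∑ m ∈ Finset.Icc 2 (L - 1), gP L x m t)) := by
  have h := fun n hn1 hnL => gP_telescoping (n := n) ht0 hadj hxt hx1 hn1 hnL
  refine ⟨h, ?_⟩
  simpa [ht0] using h 1 le_rfl (by omega)
end
end
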